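/- arXiv:1402.5311 — 6 statements merged into one kernel-verified Lean document; each statement's English description precedes it below -/
import Mathlib

section
/- For every k ≥ 2, n ≥ 1, and every function f : ({0,1}^n)^k → {0,1}, the deterministic k-party NOF communication complexity of the (k−1)-fold direct sum of f satisfies D^NOF(f^{k−1}) ≤ n + k − 1. -/
/-!  Deterministic `k`-party Number-On-the-Forehead (NOF) blackboard protocols.
Inputs come from a type `X`; party `P_i` sees every input except its own, which is
modelled by giving each party the "erased" input vector `NOFview i x` (its own
coordinate replaced by `none`).  At each step the speaker (determined by the
transcript written so far on the shared board) writes one bit, depending on the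
transcript and on the inputs it sees.  After `P.T` steps every party must be able
to determine the required output from the transcript and the inputs it sees. -/
structure NOFProtocol (k : ℕ) (X O : Type) where
  /-- number of bits written on the board (the cost of the protocol) -/
  T : ℕ
  /-- who speaks next, as a function of the transcript -/
  speaker : List Bool → Fin k
  /-- the bit written by the speaker: a function of the transcript and of the
  inputs the speaker sees -/
  nextBit : List Bool → (Fin k → Option X) → Bool
  /-- how party `i` determines the output from the final transcript and the
  inputs it sees -/
  out : Fin k → List Bool → (Fin k → Option X) → O

/-- What party `i` sees in the NOF model: every input except its own. -/
def NOFview {k : ℕ} {X : Type} (i : Fin k) (x : Fin k → X) : Fin k → Option X :=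
  fun j => if j = i then none else some (x j)

/-- The transcript on the board after `t` steps. -/
def NOFrun {k : ℕ} {X O : Type} (P : NOFProtocol k X O) (x : Fin k → X) : ℕ → List Bool
  | 0 => []
  | t + 1 => NOFrun P x t ++ [P.nextBit (NOFrun P x t) (NOFview (P.speaker (NOFrun P x t)) x)]

/-- `P` computes `F` if, on every input, every party determines `F x` from the
final transcript and the inputs it sees. -/
def NOFComputes {k : ℕ} {X O : Type} (P : NOFProtocol k X O) (F : (Fin k → X) → O) : Prop :=
  ∀ x i, P.out i (NOFrun P x P.T) (NOFview i x) = F x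

/-- Deterministic NOF communication complexity: the least cost of a protocol computing `F`. -/
noncomputable def DNOF (k : ℕ) (X O : Type) (F : (Fin k → X) → O) : ℕ :=
  sInf {c | ∃ P : NOFProtocol k X O, P.T = c ∧ NOFComputes P F}

/-- The `ℓ`-fold direct sum `f^ℓ`: party `j` holds the `ℓ` inputs `x j 0, …, x j (ℓ-1)`
on its forehead, and all `ℓ` values `f` on the respective instances must be computed. -/
def directSum {k n : ℕ} (ℓ : ℕ) (f : (Fin k → (Fin n → Bool)) → Bool) :
    (Fin k → (Fin ℓ → Fin n → Bool)) → (Fin ℓ → Bool) :=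
  fun x u => f fun j => x j u

/-! The last party sees the diagonal inputs `x_{i,i}` (`i < k - 1`) and writes their XOR,
`n` bits.  Party `i < k - 1` then XORs out the diagonal inputs it sees, which recovers its
own `x_{i,i}`; as it sees every other input of instance `i`, it can write `f` on that
instance, one bit per party. -/

section NOF

variable {k : ℕ} {X O : Type}

theorem NOFview_getD_of_ne {i j : Fin k} (h : j ≠ i) (x : Fin k → X) (d : X) :
    (NOFview i x j).getD d = x j := by
  simp [NOFview, h]

theorem update_NOFview_getD {Y : Type} (i : Fin k) (x : Fin k → X) (d : X) (g : X → Y) :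
    Function.update (fun j => g ((NOFview i x j).getD d)) i (g (x i)) = fun j => g (x j) := by
  funext j
  by_cases h : j = i
  · subst h; simp
  · simp [h, NOFview_getD_of_ne h]

theorem NOFrun_eq_take {P : NOFProtocol k X O} {x : Fin k → X} {w : List Bool}
    (hw : ∀ t (ht : t < w.length),
      P.nextBit (w.take t) (NOFview (P.speaker (w.take t)) x) = w[t]) :
    ∀ t ≤ w.length, NOFrun P x t = w.take t
  | 0, _ => rfl
  | t + 1, ht => by
    rw [NOFrun, NOFrun_eq_take hw t (by omega), hw t ht, List.take_concat_get']

end NOF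

section Protocol

open Finset

variable {K n : ℕ}

-- `+` on `Bool` is xor: Mathlib makes `Bool` a Boolean ring.
def diagSum (x : Fin (K + 1) → Fin K → Fin n → Bool) : Fin n → Bool :=
  ∑ i : Fin K, x i.castSucc i

theorem diagSum_sub_sum_erase (x : Fin (K + 1) → Fin K → Fin n → Bool) (m : Fin K) :
    diagSum x - ∑ i ∈ univ.erase m, x i.castSucc i = x m.castSucc m := by
  rw [sum_erase_eq_sub (mem_univ m), diagSum, sub_sub_cancel]

def boardPrefix (n : ℕ) (L : List Bool) : Fin n → Bool :=
  fun s => L.getD s false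

def xorDiagProtocol (K n : ℕ) (f : (Fin (K + 1) → (Fin n → Bool)) → Bool) :
    NOFProtocol (K + 1) (Fin K → Fin n → Bool) (Fin K → Bool) where
  T := n + K
  speaker L :=
    if L.length < n then Fin.last K
    else if h : L.length - n < K then (⟨L.length - n, h⟩ : Fin K).castSucc
    else Fin.last K
  nextBit L v :=
    if h : L.length < n then (∑ i : Fin K, (v i.castSucc).getD 0 i) ⟨L.length, h⟩
    else if h : L.length - n < K then
      let m : Fin K := ⟨L.length - n, h⟩
      f (Function.update (fun j => (v j).getD 0 m) m.castSucc
        (boardPrefix n L - ∑ i ∈ univ.erase m, (v i.castSucc).getD 0 i))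
    else false
  out _ L _ u := L.getD (n + u) false

def xorDiagTranscript (f : (Fin (K + 1) → (Fin n → Bool)) → Bool)
    (x : Fin (K + 1) → Fin K → Fin n → Bool) : List Bool :=
  List.ofFn (diagSum x) ++ List.ofFn (directSum K f x)

variable (f : (Fin (K + 1) → (Fin n → Bool)) → Bool) (x : Fin (K + 1) → Fin K → Fin n → Bool)

theorem length_xorDiagTranscript : (xorDiagTranscript f x).length = n + K := by
  simp [xorDiagTranscript]

theorem xorDiagProtocol_nextBit_of_lt {t : ℕ} (ht : t < n) :
    (xorDiagProtocol K n f).nextBit ((xorDiagTranscript f x).take t)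
      (NOFview ((xorDiagProtocol K n f).speaker ((xorDiagTranscript f x).take t)) x) =
      diagSum x ⟨t, ht⟩ := by
  have hlen : ((xorDiagTranscript f x).take t).length = t := by
    simp [length_xorDiagTranscript]; omega
  have hview (i : Fin K) : (NOFview (Fin.last K) x i.castSucc).getD 0 = x i.castSucc :=
    NOFview_getD_of_ne (Fin.castSucc_lt_last i).ne x 0
  simp only [xorDiagProtocol, hlen, ht, if_true, dif_pos, diagSum, hview]

theorem xorDiagProtocol_nextBit_of_ge (m : Fin K) :
    (xorDiagProtocol K n f).nextBit ((xorDiagTranscript f x).take (n + m))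
      (NOFview ((xorDiagProtocol K n f).speaker ((xorDiagTranscript f x).take (n + m))) x) =
      directSum K f x m := by
  have hlen : ((xorDiagTranscript f x).take (n + m)).length = n + m := by
    simp [length_xorDiagTranscript]
  have hboard : boardPrefix n ((xorDiagTranscript f x).take (n + m)) = diagSum x := by
    funext s
    simp [boardPrefix, xorDiagTranscript, List.take_append, List.take_of_length_le,
      List.getElem?_append_left]
  have hsum : ∑ i ∈ univ.erase m, (NOFview m.castSucc x i.castSucc).getD 0 i =
      ∑ i ∈ univ.erase m, x i.castSucc i := by
    refine sum_congr rfl fun i hi => ?_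
    rw [NOFview_getD_of_ne ((Fin.castSucc_injective K).ne (ne_of_mem_erase hi))]
  simp only [xorDiagProtocol, hlen, show ¬ n + (m : ℕ) < n by omega, if_false, dif_neg,
    not_false_iff, Nat.add_sub_cancel_left, m.isLt, dif_pos, hboard, hsum,
    diagSum_sub_sum_erase]
  rw [update_NOFview_getD m.castSucc x 0 (· m)]
  rfl

theorem NOFrun_xorDiagProtocol :
    NOFrun (xorDiagProtocol K n f) x (n + K) = xorDiagTranscript f x := by
  rw [← length_xorDiagTranscript f x, NOFrun_eq_take _ _ le_rfl, List.take_length]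
  intro t ht
  rw [length_xorDiagTranscript] at ht
  by_cases htn : t < n
  · rw [xorDiagProtocol_nextBit_of_lt f x htn]
    simp [xorDiagTranscript, List.getElem_append_left, htn]
  · obtain ⟨m, rfl⟩ : ∃ m : Fin K, t = n + m := ⟨⟨t - n, by omega⟩, by simp; omega⟩
    rw [xorDiagProtocol_nextBit_of_ge f x m]
    simp [xorDiagTranscript, List.getElem_append_right]

theorem xorDiagProtocol_computes : NOFComputes (xorDiagProtocol K n f) (directSum K f) := by
  intro x _
  funext u
  rw [show (xorDiagProtocol K n f).T = n + K from rfl, NOFrun_xorDiagProtocol]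
  simp [xorDiagProtocol, xorDiagTranscript]

end Protocol

theorem dnof_directSum_le_of_km1_general (k n : ℕ) (hk : 2 ≤ k)
    (f : (Fin k → (Fin n → Bool)) → Bool) :
    DNOF k (Fin (k - 1) → Fin n → Bool) (Fin (k - 1) → Bool) (directSum (k - 1) f) ≤
      n + k - 1 := by
  obtain ⟨K, rfl⟩ : ∃ K, k = K + 1 := ⟨k - 1, by omega⟩
  exact Nat.sInf_le ⟨xorDiagProtocol K n f, rfl, xorDiagProtocol_computes f⟩

/-- For every `k ≥ 2`, `n ≥ 1` and every `f : ({0,1}^n)^k → {0,1}`,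
the deterministic `k`-party NOF communication complexity of the `(k-1)`-fold direct
sum of `f` satisfies `D^NOF(f^{k-1}) ≤ n + k - 1`. -/
theorem dnof_directSum_le_of_km1 (k n : ℕ) (hk : 2 ≤ k) (hn : 1 ≤ n)
    (f : (Fin k → (Fin n → Bool)) → Bool) :
    DNOF k (Fin (k - 1) → Fin n → Bool) (Fin (k - 1) → Bool) (directSum (k - 1) f) ≤
      n + k - 1 :=
  dnof_directSum_le_of_km1_general k n hk f
end

section
/- For every k ≥ 2, n ≥ 1, every function f : ({0,1}^n)^k → {0,1}, and every ℓ ≥ 1 such that (k−1) divides ℓ, the deterministic k-party NOF communication complexity of the ℓ-fold direct sum of f satisfies D^NOF(f^ℓ) ≤ ℓ·n/(k−1) + ℓ. -/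
/-
Split the `ℓ = (k - 1) m` instances into `m` blocks of `k - 1`, the `r`-th instance of a block
being assigned to party `P_{r+1}`. For each block, `P_0` writes the `n`-bit XOR (a sum in the
Boolean ring `Bool`) of the foreheads of the assigned parties on their assigned instances.
Party `P_{r+1}` sees every summand but its own, so it recovers its own input on its instance,
now knows that whole instance, and writes the value of `f` on it. Each block costs
`n + (k - 1)` bits, `m (n + k - 1) = ℓ n / (k - 1) + ℓ` in total.
-/

open Finset

lemma Finset.sum_sub_sum_ite_eq_zero {ι A : Type} [Fintype ι] [DecidableEq ι] [AddCommGroup A]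
    (a : ι → A) (i : ι) : ∑ j, a j - ∑ j, (if j = i then 0 else a j) = a i := by
  simp only [sum_ite, sum_const_zero, zero_add, filter_ne']
  rw [sum_erase_eq_sub (mem_univ i), sub_sub_cancel]

lemma List.getD_map_range {α : Type} (B : ℕ → α) (d : α) {t T : ℕ} (h : t < T) :
    ((List.range T).map B).getD t d = B t := by
  simp [List.getD_eq_getElem?_getD, h]

section NOFProtocol

variable {k : ℕ} {X Y O : Type}

lemma NOFview_elim_eq_ite (i j : Fin k) (x : Fin k → X) (d : Y) (φ : X → Y) :
    (NOFview i x j).elim d φ = if j = i then d else φ (x j) := by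
  unfold NOFview
  split_ifs <;> rfl

lemma NOFview_elim (i j : Fin k) (x : Fin k → X) (φ : X → Y) :
    (NOFview i x j).elim (φ (x i)) φ = φ (x j) := by
  rw [NOFview_elim_eq_ite]
  split_ifs with h
  · rw [h]
  · rfl

lemma NOFrun_eq_map_range (P : NOFProtocol k X O) (x : Fin k → X) {B : ℕ → Bool} {T : ℕ}
    (hB : ∀ t < T,
      P.nextBit ((List.range t).map B) (NOFview (P.speaker ((List.range t).map B)) x) = B t) :
    ∀ t ≤ T, NOFrun P x t = (List.range t).map B := by
  intro t ht
  induction t with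
  | zero => rfl
  | succ t ih =>
    rw [NOFrun, ih (by omega), hB t (by omega), List.range_succ, List.map_append]
    rfl

lemma DNOF_le_of_computes {P : NOFProtocol k X O} {F : (Fin k → X) → O}
    (hP : NOFComputes P F) : DNOF k X O F ≤ P.T :=
  Nat.sInf_le ⟨P, rfl, hP⟩

end NOFProtocol

namespace DirectSumProtocol

variable {m n p : ℕ} {ι : Type}

variable (m n p) in
/-- Round `g` consists of the `n` slots `(g, inl s)` and then the `p` slots `(g, inr r)`. -/
def schedule : Fin m × (Fin n ⊕ Fin p) ≃ Fin (m * (n + p)) :=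
  (Equiv.prodCongr (Equiv.refl _) finSumFinEquiv).trans finProdFinEquiv

variable (m n p) in
def slot (t : ℕ) : Option (Fin m × (Fin n ⊕ Fin p)) :=
  if h : t < m * (n + p) then some ((schedule m n p).symm ⟨t, h⟩) else none

lemma slot_schedule (c : Fin m × (Fin n ⊕ Fin p)) : slot m n p (schedule m n p c) = some c := by
  simp [slot]

lemma schedule_inl_lt_inr (g : Fin m) (s : Fin n) (r : Fin p) :
    (schedule m n p (g, .inl s) : ℕ) < schedule m n p (g, .inr r) := by
  simpa [schedule, finProdFinEquiv] using Nat.lt_add_right r s.isLt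

variable (e : ι ≃ Fin m × Fin p) (f : (Fin (p + 1) → Fin n → Bool) → Bool)

def protocol : NOFProtocol (p + 1) (ι → Fin n → Bool) (ι → Bool) where
  T := m * (n + p)
  speaker ts := match slot m n p ts.length with
    | some (_, .inr r) => r.succ
    | _ => 0
  nextBit ts v := match slot m n p ts.length with
    | some (g, .inl s) => (∑ r, (v r.succ).elim 0 (· (e.symm (g, r)))) s
    | some (g, .inr r) =>
      let own : Fin n → Bool := (fun s => ts.getD (schedule m n p (g, .inl s)) false) -
        ∑ r', (v r'.succ).elim 0 (· (e.symm (g, r')))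
      f fun j => (v j).elim own (· (e.symm (g, r)))
    | none => false
  out _ ts _ u := ts.getD (schedule m n p ((e u).1, .inr (e u).2)) false

variable (x : Fin (p + 1) → ι → Fin n → Bool)

def board (t : ℕ) : Bool :=
  match slot m n p t with
    | some (g, .inl s) => (∑ r, x r.succ (e.symm (g, r))) s
    | some (g, .inr r) => f fun j => x j (e.symm (g, r))
    | none => false

lemma board_inl (g : Fin m) (s : Fin n) :
    board e f x (schedule m n p (g, .inl s)) = (∑ r, x r.succ (e.symm (g, r))) s := by
  rw [board, slot_schedule]

lemma board_inr (g : Fin m) (r : Fin p) :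
    board e f x (schedule m n p (g, .inr r)) = f fun j => x j (e.symm (g, r)) := by
  rw [board, slot_schedule]

lemma protocol_nextBit (c : Fin m × (Fin n ⊕ Fin p)) :
    let ts := (List.range (schedule m n p c)).map (board e f x)
    (protocol e f).nextBit ts (NOFview ((protocol e f).speaker ts) x) =
      board e f x (schedule m n p c) := by
  intro ts
  have hslot : slot m n p ts.length = some c := by
    rw [List.length_map, List.length_range, slot_schedule]
  obtain ⟨g, s | r⟩ := c
  · simp only [protocol, hslot, board_inl, NOFview_elim_eq_ite, Fin.succ_ne_zero, if_false]
  · have hxor : (fun s => ts.getD (schedule m n p (g, .inl s)) false) =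
        ∑ r', x r'.succ (e.symm (g, r')) := by
      funext s
      rw [List.getD_map_range _ _ (schedule_inl_lt_inr g s r), board_inl]
    have own : (fun s => ts.getD (schedule m n p (g, .inl s)) false) -
        ∑ r', (NOFview r.succ x r'.succ).elim 0 (· (e.symm (g, r'))) = x r.succ (e.symm (g, r)) := by
      simp only [hxor, NOFview_elim_eq_ite, Fin.succ_inj]
      exact Finset.sum_sub_sum_ite_eq_zero (fun r' => x r'.succ (e.symm (g, r'))) r
    simp only [protocol, hslot, board_inr, own]
    exact congrArg f (funext fun j => NOFview_elim r.succ j x (· (e.symm (g, r))))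

lemma NOFrun_protocol :
    NOFrun (protocol e f) x (m * (n + p)) = (List.range (m * (n + p))).map (board e f x) :=
  NOFrun_eq_map_range _ x
    (fun t ht => by simpa using protocol_nextBit e f x ((schedule m n p).symm ⟨t, ht⟩)) _ le_rfl

lemma protocol_computes : NOFComputes (protocol e f) fun x u => f fun j => x j u := by
  intro x i
  funext u
  change (NOFrun (protocol e f) x (m * (n + p))).getD (schedule m n p ((e u).1, .inr (e u).2))
    false = _
  rw [NOFrun_protocol, List.getD_map_range _ _ (schedule m n p _).isLt, board_inr]
  simp

end DirectSumProtocol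

theorem dnof_directSum_le_general (k n ℓ : ℕ) (hk : 2 ≤ k)
    (hdvd : (k - 1) ∣ ℓ) (f : (Fin k → (Fin n → Bool)) → Bool) :
    DNOF k (Fin ℓ → Fin n → Bool) (Fin ℓ → Bool) (directSum ℓ f) ≤
      ℓ * n / (k - 1) + ℓ := by
  obtain ⟨p, rfl⟩ : ∃ p, k = p + 1 := ⟨k - 1, by omega⟩
  obtain ⟨m, rfl⟩ := hdvd
  have hp : 0 < p := by omega
  let e : Fin ((p + 1 - 1) * m) ≃ Fin m × Fin p :=
    (finCongr (by simp)).trans (finProdFinEquiv.symm.trans (Equiv.prodComm _ _))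
  calc DNOF _ _ _ (directSum _ f) ≤ m * (n + p) :=
        DNOF_le_of_computes (DirectSumProtocol.protocol_computes e f)
    _ = (p + 1 - 1) * m * n / (p + 1 - 1) + (p + 1 - 1) * m := by
        rw [Nat.add_sub_cancel, mul_assoc, Nat.mul_div_cancel_left _ hp]
        ring

/-- For every `k ≥ 2`, `n ≥ 1`, every `f : ({0,1}^n)^k → {0,1}`
and every `ℓ ≥ 1` with `(k-1) ∣ ℓ`, we have `D^NOF(f^ℓ) ≤ ℓ·n/(k-1) + ℓ`. -/
theorem dnof_directSum_le (k n ℓ : ℕ) (hk : 2 ≤ k) (hn : 1 ≤ n) (hℓ : 1 ≤ ℓ)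
    (hdvd : (k - 1) ∣ ℓ) (f : (Fin k → (Fin n → Bool)) → Bool) :
    DNOF k (Fin ℓ → Fin n → Bool) (Fin ℓ → Bool) (directSum ℓ f) ≤
      ℓ * n / (k - 1) + ℓ :=
  dnof_directSum_le_general k n ℓ hk hdvd f
end

section
/- For every odd k ≥ 3 and every n ≥ 1, the deterministic k-party NOF communication complexity of the ((k−1)/2)-fold direct sum of the equality function satisfies D^NOF(EQ_k^{(k−1)/2}) ≤ 1 + (k−1)/2. -/
/-- The `k`-party equality function: `1` iff all `k` inputs are equal. -/
def EQfun (k n : ℕ) : (Fin k → (Fin n → Bool)) → Bool :=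
  fun x => decide (∀ i j : Fin k, x i = x j)

namespace NOFEq

abbrev XX (L n : ℕ) := Fin L → Fin n → Bool

def emb1 {L : ℕ} (u : Fin L) : Fin (2*L+1) := ⟨u.val, by omega⟩
def emb2 {L : ℕ} (u : Fin L) : Fin (2*L+1) := ⟨L + u.val, by omega⟩
def lastP (L : ℕ) : Fin (2*L+1) := ⟨2*L, by omega⟩

def g : Bool → ZMod 2 := fun b => if b then 1 else 0

lemma g_decide (s : ZMod 2) : g (decide (s = 1)) = s := by revert s; decide

lemma decide_g (b : Bool) : decide (g b = 1) = b := by cases b <;> simp [g]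

def allEqB {L n : ℕ} (v : Fin (2*L+1) → Option (XX L n)) (u : Fin L) : Bool :=
  decide (∀ a b : Fin (2*L+1), ∀ y ∈ v a, ∀ z ∈ v b, y u = z u)

def pairEqB {L n : ℕ} (v : Fin (2*L+1) → Option (XX L n)) (u : Fin L) : Bool :=
  decide (∀ y ∈ v (emb1 u), ∀ z ∈ v (emb2 u), y u = z u)

def lastBit {L n : ℕ} (t : List Bool) (v : Fin (2*L+1) → Option (XX L n)) : Bool :=
  decide ((∑ u : Fin L, g (t.getD u.val false && pairEqB v u)) = 1)

def theProtocol (L n : ℕ) : NOFProtocol (2*L+1) (XX L n) (Fin L → Bool) where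
  T := L + 1
  speaker t := if h : t.length < L then emb1 ⟨t.length, h⟩ else lastP L
  nextBit t v := if h : t.length < L then allEqB v ⟨t.length, h⟩ else lastBit t v
  out j t v := fun u =>
    if j.val = u.val then
      decide (g (t.getD L false) +
        ∑ u' ∈ Finset.univ.erase u, g (t.getD u'.val false && pairEqB v u') = 1)
    else t.getD u.val false && allEqB v u

variable {L n : ℕ}

lemma allEqB_view (x : Fin (2*L+1) → XX L n) (j : Fin (2*L+1)) (u : Fin L) :
    allEqB (NOFview j x) u = decide (∀ a b, a ≠ j → b ≠ j → x a u = x b u) := by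
  unfold allEqB NOFview
  rw [decide_eq_decide]
  constructor
  · intro h a b ha hb
    exact h a b (x a) (by simp [ha]) (x b) (by simp [hb])
  · intro h a b y hy z hz
    by_cases ha : a = j <;> by_cases hb : b = j <;> simp [ha, hb] at hy hz
    subst hy; subst hz; exact h a b ha hb

lemma pairEqB_view (x : Fin (2*L+1) → XX L n) (j : Fin (2*L+1)) (u : Fin L)
    (h1 : emb1 u ≠ j) (h2 : emb2 u ≠ j) :
    pairEqB (NOFview j x) u = decide (x (emb1 u) u = x (emb2 u) u) := by
  unfold pairEqB NOFview
  rw [decide_eq_decide]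
  constructor
  · intro h; exact h (x (emb1 u)) (by simp [h1]) (x (emb2 u)) (by simp [h2])
  · intro h y hy z hz
    simp [h1, h2] at hy hz
    subst hy; subst hz; exact h

/-- the true answer on instance `u` -/
def ans (x : Fin (2*L+1) → XX L n) (u : Fin L) : Bool :=
  decide (∀ a b : Fin (2*L+1), x a u = x b u)

lemma ans_eq_directSum (x : Fin (2*L+1) → XX L n) (u : Fin L) :
    directSum L (EQfun (2*L+1) n) x u = ans x u := by
  rfl

lemma merge1 (x : Fin (2*L+1) → XX L n) (u : Fin L) (j : Fin (2*L+1)) (hj : j ≠ emb1 u) :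
    (decide (∀ a b, a ≠ emb1 u → b ≠ emb1 u → x a u = x b u) &&
      decide (∀ a b, a ≠ j → b ≠ j → x a u = x b u)) = ans x u := by
  unfold ans
  rw [← Bool.decide_and, decide_eq_decide]
  constructor
  · rintro ⟨h1, h2⟩ a b
    obtain ⟨m, hm1, hm2, hm3⟩ : ∃ m, m < 2*L+1 ∧ m ≠ u.val ∧ m ≠ j.val := by
      have hu := u.isLt; have hjv := j.isLt
      by_cases h0 : u.val = 0
      · by_cases hb : j.val = 1
        · exact ⟨2, by omega⟩
        · exact ⟨1, by omega⟩
      · by_cases hb : j.val = 0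
        · by_cases hc : u.val = 1
          · exact ⟨2, by omega⟩
          · exact ⟨1, by omega⟩
        · exact ⟨0, by omega⟩
    set c : Fin (2*L+1) := ⟨m, hm1⟩ with hc
    have hc1 : c ≠ emb1 u := fun h => hm2 (congrArg Fin.val h)
    have hc2 : c ≠ j := fun h => hm3 (congrArg Fin.val h)
    have key : ∀ a : Fin (2*L+1), x a u = x c u := by
      intro a
      by_cases ha : a = emb1 u
      · exact h2 a c (by rw [ha]; exact fun h => hj h.symm) hc2
      · exact h1 a c ha hc1
    rw [key a, key b]
  · intro h; exact ⟨fun a b _ _ => h a b, fun a b _ _ => h a b⟩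

lemma emb1_ne_emb2 (u v : Fin L) : emb1 u ≠ emb2 v := by
  intro h
  have := congrArg Fin.val h
  simp [emb1, emb2] at this
  omega

lemma merge2 (x : Fin (2*L+1) → XX L n) (u : Fin L) :
    (decide (∀ a b, a ≠ emb1 u → b ≠ emb1 u → x a u = x b u) &&
      decide (x (emb1 u) u = x (emb2 u) u)) = ans x u := by
  unfold ans
  rw [← Bool.decide_and, decide_eq_decide]
  constructor
  · rintro ⟨h1, h2⟩ a b
    have key : ∀ a : Fin (2*L+1), x a u = x (emb2 u) u := by
      intro a
      by_cases ha : a = emb1 u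
      · rw [ha]; exact h2
      · exact h1 a (emb2 u) ha (emb1_ne_emb2 u u).symm
    rw [key a, key b]
  · intro h; exact ⟨fun a b _ _ => h a b, h (emb1 u) (emb2 u)⟩

/-- the bit written by party `u` -/
def A (x : Fin (2*L+1) → XX L n) (u : Fin L) : Bool :=
  allEqB (NOFview (emb1 u) x) u

lemma getD_ofFn (f : Fin L → Bool) (u : Fin L) :
    (List.ofFn f).getD u.val false = f u := by
  rw [List.getD_eq_getElem?_getD, List.getElem?_ofFn]
  simp [List.ofFnNthVal, u.isLt]

lemma getD_board (f : Fin L → Bool) (d : Bool) (u : Fin L) :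
    (List.ofFn f ++ [d]).getD u.val false = f u := by
  rw [List.getD_eq_getElem?_getD, List.getElem?_append_left (by simp [u.isLt]),
    List.getElem?_ofFn]
  simp [List.ofFnNthVal, u.isLt]

lemma getD_board_last (f : Fin L → Bool) (d : Bool) :
    (List.ofFn f ++ [d]).getD L false = d := by
  rw [List.getD_eq_getElem?_getD, List.getElem?_append_right (by simp)]
  simp

lemma run_take (x : Fin (2*L+1) → XX L n) :
    ∀ t, t ≤ L → NOFrun (theProtocol L n) x t = (List.ofFn (A x)).take t := by
  intro t
  induction t with
  | zero => intro _; simp [NOFrun]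
  | succ t ih =>
    intro h
    have ht : t < L := by omega
    rw [NOFrun, ih (by omega)]
    have hlen : ((List.ofFn (A x)).take t).length = t := by simp; omega
    have hsp : (theProtocol L n).speaker ((List.ofFn (A x)).take t) = emb1 ⟨t, ht⟩ := by
      simp [theProtocol, hlen, ht]
    have hnb : (theProtocol L n).nextBit ((List.ofFn (A x)).take t)
        (NOFview (emb1 ⟨t, ht⟩) x) = A x ⟨t, ht⟩ := by
      simp [theProtocol, hlen, ht, A]
    rw [hsp, hnb, List.take_succ, List.getElem?_ofFn]
    simp [List.ofFnNthVal, ht]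

/-- the final bit -/
def D (x : Fin (2*L+1) → XX L n) : Bool :=
  decide ((∑ u : Fin L, g (ans x u)) = 1)

lemma lastBit_eval (x : Fin (2*L+1) → XX L n) :
    lastBit (List.ofFn (A x)) (NOFview (lastP L) x) = D x := by
  unfold lastBit D
  have hsum : (∑ u : Fin L, g ((List.ofFn (A x)).getD u.val false
      && pairEqB (NOFview (lastP L) x) u)) = ∑ u : Fin L, g (ans x u) := by
    apply Finset.sum_congr rfl
    intro u _
    congr 1
    rw [getD_ofFn, pairEqB_view x (lastP L) u
        (by intro h; have := congrArg Fin.val h; simp [emb1, lastP] at this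
            have := u.isLt; omega)
        (by intro h; have := congrArg Fin.val h; simp [emb2, lastP] at this
            have := u.isLt; omega),
      A, allEqB_view]
    exact merge2 x u
  rw [hsum]

lemma run_full (x : Fin (2*L+1) → XX L n) :
    NOFrun (theProtocol L n) x (L + 1) = List.ofFn (A x) ++ [D x] := by
  rw [NOFrun, run_take x L le_rfl, List.take_of_length_le (by simp)]
  have hlen : (List.ofFn (A x)).length = L := by simp
  have hsp : (theProtocol L n).speaker (List.ofFn (A x)) = lastP L := by
    simp [theProtocol, hlen]
  have hnb : (theProtocol L n).nextBit (List.ofFn (A x)) (NOFview (lastP L) x)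
      = D x := by
    simp only [theProtocol, hlen, lt_irrefl, dite_false]
    exact lastBit_eval x
  rw [hsp, hnb]

lemma computes (L n : ℕ) :
    NOFComputes (theProtocol L n) (directSum L (EQfun (2*L+1) n)) := by
  intro x j
  funext u
  have hT : (theProtocol L n).T = L + 1 := rfl
  rw [hT, run_full x, ans_eq_directSum]
  show (if j.val = u.val then _ else _) = ans x u
  by_cases hj : j.val = u.val
  · rw [if_pos hj]
    have hju : j = emb1 u := by apply Fin.ext; simpa [emb1] using hj
    have hterm : ∀ u' ∈ Finset.univ.erase u,
        g ((List.ofFn (A x) ++ [D x]).getD u'.val false && pairEqB (NOFview j x) u')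
          = g (ans x u') := by
      intro u' hu'
      have hne : u' ≠ u := (Finset.mem_erase.mp hu').1
      congr 1
      rw [getD_board, pairEqB_view x j u'
          (by rw [hju]; intro h; have := congrArg Fin.val h; simp [emb1] at this
              exact hne (Fin.ext this))
          (by rw [hju]; intro h; have := congrArg Fin.val h; simp [emb1, emb2] at this
              have := u.isLt; omega),
        A, allEqB_view]
      exact merge2 x u'
    rw [Finset.sum_congr rfl hterm, getD_board_last]
    have hD : g (D x) = ∑ u' : Fin L, g (ans x u') := g_decide _
    have key : g (D x) + ∑ u' ∈ Finset.univ.erase u, g (ans x u') = g (ans x u) := by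
      rw [hD, ← Finset.sum_erase_add _ _ (Finset.mem_univ u)]
      generalize (∑ u' ∈ Finset.univ.erase u, g (ans x u')) = s
      have h2 : s + s = 0 := by
        have h20 : (2 : ZMod 2) = 0 := by decide
        calc s + s = 2 * s := by ring
          _ = 0 := by rw [h20, zero_mul]
      calc s + g (ans x u) + s = g (ans x u) + (s + s) := by ring
        _ = g (ans x u) := by rw [h2, add_zero]
    rw [key, decide_g]
  · rw [if_neg hj, getD_board, A, allEqB_view, allEqB_view]
    exact merge1 x u j (by intro h; apply hj; rw [h]; rfl)

theorem aux (L n : ℕ) :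
    DNOF (2*L+1) (XX L n) (Fin L → Bool) (directSum L (EQfun (2*L+1) n)) ≤ 1 + L := by
  apply Nat.sInf_le
  exact ⟨theProtocol L n, by simp [theProtocol, Nat.add_comm], computes L n⟩

end NOFEq

/-- For every odd `k ≥ 3` and every `n ≥ 1`,
`D^NOF(EQ_k^{(k-1)/2}) ≤ 1 + (k-1)/2`. -/
theorem dnof_eq_directSum_le (k n : ℕ) (hk : 3 ≤ k) (hodd : Odd k) (hn : 1 ≤ n) :
    DNOF k (Fin ((k - 1) / 2) → Fin n → Bool) (Fin ((k - 1) / 2) → Bool)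
        (directSum ((k - 1) / 2) (EQfun k n)) ≤
      1 + (k - 1) / 2 := by
  obtain ⟨m, rfl⟩ := hodd
  have hm : (2 * m + 1 - 1) / 2 = m := by omega
  rw [hm]
  exact NOFEq.aux m n
end

section
/- Let f : ({0,1}^n)^k → {0,1}, let G = ([k],E) be a restriction graph, let Q be an oblivious k-party NOF_G protocol computing f, and let Π = (π_1,…,π_ℓ) be a sequence of permutations of [k] with π_1 the identity. Assume that Q is π_i-pattern-robust for every 2 ≤ i ≤ ℓ, and let S be a (Π,G)-multiplexing set. Then D^NOF(f^ℓ) ≤ ℓ·D^{NOF_G}(Q) + ℓ − Σ_{(a,b,R)∈S} |R|·W_Q(a,b). -/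
/-!  The restricted model `NOF_G`.  Given a restriction graph `G = ([k], E)`,
party `P_i` sees input `x_j` iff `E i j`.  Communication is over point-to-point
channels: in each round `t`, each party `P_i` may send a message (a bit string)
to each party `P_j`, depending on the messages `P_i` received in earlier rounds
and on the inputs `P_i` sees.  Some fixed party `outParty`, known in advance,
must output the value of the function. -/
structure GProtocol (k : ℕ) (X O : Type) where
  /-- number of rounds -/
  rounds : ℕ
  /-- `msg t i j hist view` is the message `P_i` sends to `P_j` in round `t`, as a
  function of the messages `P_i` received in previous rounds (`hist t' j'` being
  the message received from `P_j'` in round `t' < t`) and of the inputs `P_i` sees -/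
  msg : ℕ → Fin k → Fin k → (ℕ → Fin k → List Bool) → (Fin k → Option X) → List Bool
  /-- the party that announces the output -/
  outParty : Fin k
  /-- the output, computed from the messages `outParty` received and the inputs it sees -/
  out : (ℕ → Fin k → List Bool) → (Fin k → Option X) → O

/-- What party `i` sees in the `NOF_G` model: input `x j` iff `E i j`. -/
def viewG {k : ℕ} {X : Type} (E : Fin k → Fin k → Prop) [DecidableRel E]
    (i : Fin k) (x : Fin k → X) : Fin k → Option X :=
  fun j => if E i j then some (x j) else none

/-- `recvHist E P x t i t' j` is the message that party `i` received from party `j`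
in round `t' < t` when running `P` on input `x` (and `[]` for `t' ≥ t`). -/
def recvHist {k : ℕ} {X O : Type} (E : Fin k → Fin k → Prop) [DecidableRel E]
    (P : GProtocol k X O) (x : Fin k → X) : ℕ → Fin k → ℕ → Fin k → List Bool
  | 0 => fun _ _ _ => []
  | t + 1 => fun i t' j =>
      if t' = t then P.msg t j i (recvHist E P x t j) (viewG E j x)
      else recvHist E P x t i t' j

/-- The message sent from `P_i` to `P_j` in round `t` on input `x`. -/
def sentAt {k : ℕ} {X O : Type} (E : Fin k → Fin k → Prop) [DecidableRel E]
    (P : GProtocol k X O) (x : Fin k → X) (t : ℕ) (i j : Fin k) : List Bool :=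
  P.msg t i j (recvHist E P x t i) (viewG E i x)

/-- `P` computes `F` in `NOF_G`:  on every input, the designated output party
outputs `F x` from the messages it received and the inputs it sees. -/
def ComputesG {k : ℕ} {X O : Type} (E : Fin k → Fin k → Prop) [DecidableRel E]
    (P : GProtocol k X O) (F : (Fin k → X) → O) : Prop :=
  ∀ x, P.out (recvHist E P x P.rounds P.outParty) (viewG E P.outParty x) = F x

/-- `P` is oblivious with communication pattern `LEN`: on every input, the message
sent from `P_i` to `P_j` in round `t` has length exactly `LEN t i j`. -/
def ObliviousG {k : ℕ} {X O : Type} (E : Fin k → Fin k → Prop) [DecidableRel E]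
    (P : GProtocol k X O) (LEN : ℕ → Fin k → Fin k → ℕ) : Prop :=
  ∀ x t (i j : Fin k), t < P.rounds → (sentAt E P x t i j).length = LEN t i j

/-- Total number of bits sent on input `x`. -/
def totalBitsG {k : ℕ} {X O : Type} (E : Fin k → Fin k → Prop) [DecidableRel E]
    (P : GProtocol k X O) (x : Fin k → X) : ℕ :=
  ∑ t ∈ Finset.range P.rounds, ∑ i : Fin k, ∑ j : Fin k, (sentAt E P x t i j).length

/-- The cost `D^{NOF_G}(Q)` of an oblivious protocol with `T` rounds and pattern `LEN`. -/
def costOfLEN {k : ℕ} (T : ℕ) (LEN : ℕ → Fin k → Fin k → ℕ) : ℕ :=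
  ∑ t ∈ Finset.range T, ∑ i : Fin k, ∑ j : Fin k, LEN t i j

/-- `W_Q(a,b)`: total number of bits sent from `P_a` to `P_b` in an oblivious
protocol with `T` rounds and pattern `LEN`. -/
def WofLEN {k : ℕ} (T : ℕ) (LEN : ℕ → Fin k → Fin k → ℕ) (a b : Fin k) : ℕ :=
  ∑ t ∈ Finset.range T, LEN t a b

/-- The relabelled restriction graph `G_π`: `(i,j)` is an edge of `G_π` iff
`(π⁻¹ i, π⁻¹ j)` is an edge of `G`. -/
def permRel {k : ℕ} (π : Equiv.Perm (Fin k)) (E : Fin k → Fin k → Prop) :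
    Fin k → Fin k → Prop :=
  fun i j => E (π.symm i) (π.symm j)

instance permRel.decidableRel {k : ℕ} (π : Equiv.Perm (Fin k)) (E : Fin k → Fin k → Prop)
    [h : DecidableRel E] : DecidableRel (permRel π E) :=
  fun i j => h (π.symm i) (π.symm j)

/-- `MAP_{Π,b,R} = {π_r(b) : r ∈ R}` for a sequence `πs` of permutations
(indexed `1,…,ℓ`). -/
def MAPf {k : ℕ} (πs : ℕ → Equiv.Perm (Fin k)) (b : Fin k) (R : Finset ℕ) :
    Finset (Fin k) :=
  R.image fun r => πs r b

/-- A triplet `(a,b,R)` is `(Π,G)`-good (Definition 3 of the paper):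
(1) `MAP_{Π,a,R} = {a}`; (2) `MAP_{Π,b,R}` is a subset of the non-neighbours of `a`
of size `|R|` containing neither `a` nor `b`; (3) for every `r ∈ R`,
`(MAP_{Π,b,R} ∪ {b}) \ {π_r(b)}` consists of non-neighbours of `a` in `G_{π_r}`. -/
def IsGood (k ℓ : ℕ) (πs : ℕ → Equiv.Perm (Fin k)) (E : Fin k → Fin k → Prop)
    (a b : Fin k) (R : Finset ℕ) : Prop :=
  a ≠ b ∧ R ⊆ Finset.Icc 1 ℓ ∧
    MAPf πs a R = {a} ∧
    ((MAPf πs b R).card = R.card ∧ (∀ c ∈ MAPf πs b R, ¬ E a c) ∧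
      a ∉ MAPf πs b R ∧ b ∉ MAPf πs b R) ∧
    ∀ r ∈ R, ∀ c ∈ (MAPf πs b R ∪ {b}) \ {πs r b},
      ¬ E ((πs r).symm a) ((πs r).symm c)

/-- A `(Π,G)`-multiplexing set: a set of `(Π,G)`-good triplets such that for any two
distinct triplets `(a,b,R)`, `(a',b',R')`: `a ∉ {b'} ∪ MAP_{Π,b',R'}` and
`({b} ∪ MAP_{Π,b,R}) ∩ ({b'} ∪ MAP_{Π,b',R'}) = ∅`. -/
def IsMultiplexingSet (k ℓ : ℕ) (πs : ℕ → Equiv.Perm (Fin k)) (E : Fin k → Fin k → Prop)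
    (S : Finset (Fin k × Fin k × Finset ℕ)) : Prop :=
  (∀ s ∈ S, IsGood k ℓ πs E s.1 s.2.1 s.2.2) ∧
    ∀ s ∈ S, ∀ s' ∈ S, s ≠ s' →
      s.1 ∉ insert s'.2.1 (MAPf πs s'.2.1 s'.2.2) ∧
      insert s.2.1 (MAPf πs s.2.1 s.2.2) ∩ insert s'.2.1 (MAPf πs s'.2.1 s'.2.2) = ∅

/-- `Q` (an oblivious `NOF_G` protocol for `f` with `T` rounds and pattern `LEN`)
is `π`-pattern-robust: there is an oblivious `NOF_{G_π}` protocol computing `f`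
whose communication pattern is `LEN_π`, i.e. `LEN_π(t,i,j) = LEN(t,π⁻¹ i,π⁻¹ j)`. -/
def PatternRobust (k : ℕ) (X : Type) (E : Fin k → Fin k → Prop) [DecidableRel E]
    (T : ℕ) (LEN : ℕ → Fin k → Fin k → ℕ) (f : (Fin k → X) → Bool)
    (π : Equiv.Perm (Fin k)) : Prop :=
  ∃ Q' : GProtocol k X Bool, Q'.rounds = T ∧
    ComputesG (permRel π E) Q' f ∧
    ObliviousG (permRel π E) Q' fun t i j => LEN t (π.symm i) (π.symm j)

instance : Std.Commutative xor := ⟨Bool.xor_comm⟩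
instance : Std.Associative xor := ⟨Bool.xor_assoc⟩

namespace NOFSim

structure Slot (k : ℕ) (X : Type) where
  writer : Fin k
  tag : ℕ
  len : ℕ
  bits : (Fin k → X) → List Bool

variable {k : ℕ} {X O : Type}

def tauL (L : List (Slot k X)) (x : Fin k → X) : List Bool := L.flatMap fun σ => σ.bits x

def wlistL (L : List (Slot k X)) : List (Fin k) := L.flatMap fun σ => List.replicate σ.len σ.writer

def NL (L : List (Slot k X)) : ℕ := (L.map Slot.len).sum

lemma tauL_length (L : List (Slot k X)) (hlen : ∀ σ ∈ L, ∀ x, (σ.bits x).length = σ.len) (x) :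
    (tauL L x).length = NL L := by
  unfold tauL NL
  rw [List.length_flatMap]
  congr 1
  refine List.map_congr_left ?_
  intro σ hσ
  exact hlen σ hσ x

lemma wlistL_length (L : List (Slot k X)) : (wlistL L).length = NL L := by
  unfold wlistL NL
  rw [List.length_flatMap]
  congr 1
  refine List.map_congr_left ?_
  intro σ hσ
  simp

lemma eqslots (L : List (Slot k X)) {x y : Fin k → X} :
    (∀ σ ∈ L, ∀ x, (σ.bits x).length = σ.len) → tauL L x = tauL L y →
    ∀ σ ∈ L, σ.bits x = σ.bits y := by
  induction L with
  | nil => intro _ _; simp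
  | cons σ l ih =>
      intro hlen h
      unfold tauL at h
      simp only [List.flatMap_cons] at h
      have hl : (σ.bits x).length = (σ.bits y).length := by
        rw [hlen σ (by simp) x, hlen σ (by simp) y]
      obtain ⟨h1, h2⟩ := List.append_inj h hl
      intro σ' hσ'
      rcases List.mem_cons.mp hσ' with rfl | hσ'
      · exact h1
      · exact ih (fun τ hτ => hlen τ (by simp [hτ])) h2 σ' hσ'

/-- position decomposition in a list of blocks of given lengths -/
lemma exists_pos (l : List ℕ) (p : ℕ) (hp : p < l.sum) :
    ∃ m, ∃ h : m < l.length, ∃ o, o < l[m] ∧ p = (l.take m).sum + o := by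
  induction l generalizing p with
  | nil => simp at hp
  | cons a l ih =>
      by_cases h : p < a
      · exact ⟨0, by simp, p, by simpa using h, by simp⟩
      · push_neg at h
        have hp' : p - a < l.sum := by
          simp only [List.sum_cons] at hp
          omega
        obtain ⟨m, hm, o, ho, heq⟩ := ih (p - a) hp'
        exact ⟨m + 1, by simpa using hm, o, ho, by simp [List.take_succ_cons]; omega⟩

lemma tau_decomp (L : List (Slot k X)) (m : ℕ) (hm : m < L.length) (x) :
    tauL L x = tauL (L.take m) x ++ L[m].bits x ++ tauL (L.drop (m+1)) x := by
  have h0 : L.take m ++ L[m] :: L.drop (m+1) = L := by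
    rw [← List.drop_eq_getElem_cons hm, List.take_append_drop]
  unfold tauL
  conv_lhs => rw [← h0]
  rw [List.flatMap_append, List.flatMap_cons, ← List.append_assoc]

lemma take_start (L : List (Slot k X)) (hlen : ∀ σ ∈ L, ∀ x, (σ.bits x).length = σ.len)
    (m : ℕ) (hm : m < L.length) (x) :
    (tauL L x).take (NL (L.take m)) = tauL (L.take m) x := by
  have hl : (tauL (L.take m) x).length = NL (L.take m) :=
    tauL_length _ (fun σ hσ => hlen σ (List.mem_of_mem_take hσ)) x
  rw [tau_decomp L m hm x, List.append_assoc, ← hl, List.take_left]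


lemma wlist_decomp (L : List (Slot k X)) (m : ℕ) (hm : m < L.length) :
    wlistL L = wlistL (L.take m) ++ List.replicate L[m].len L[m].writer ++ wlistL (L.drop (m+1)) := by
  have h0 : L.take m ++ L[m] :: L.drop (m+1) = L := by
    rw [← List.drop_eq_getElem_cons hm, List.take_append_drop]
  unfold wlistL
  conv_lhs => rw [← h0]
  rw [List.flatMap_append, List.flatMap_cons, ← List.append_assoc]

lemma getD_at (L : List (Slot k X)) (hlen : ∀ σ ∈ L, ∀ x, (σ.bits x).length = σ.len)
    (m : ℕ) (hm : m < L.length) (o : ℕ) (ho : o < L[m].len) (x) :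
    (tauL L x).getD (NL (L.take m) + o) false = (L[m].bits x).getD o false := by
  rw [tau_decomp L m hm x, List.append_assoc]
  have h1 : (tauL (L.take m) x).length = NL (L.take m) :=
    tauL_length _ (fun σ hσ => hlen σ (List.mem_of_mem_take hσ)) x
  rw [List.getD_append_right _ _ _ _ (by omega)]
  rw [h1, Nat.add_sub_cancel_left]
  refine List.getD_append _ _ _ _ ?_
  rw [hlen L[m] (List.getElem_mem hm) x]; exact ho

lemma writer_at (L : List (Slot k X)) (m : ℕ) (hm : m < L.length) (o : ℕ) (ho : o < L[m].len)
    (d : Fin k) : (wlistL L).getD (NL (L.take m) + o) d = L[m].writer := by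
  rw [wlist_decomp L m hm, List.append_assoc]
  have h1 : (wlistL (L.take m)).length = NL (L.take m) := wlistL_length _
  rw [List.getD_append_right _ _ _ _ (by omega)]
  rw [h1, Nat.add_sub_cancel_left]
  rw [List.getD_append _ _ _ _ (by simpa using ho)]
  rw [List.getD_eq_getElem _ _ (by simpa using ho), List.getElem_replicate]

lemma mem_take_of_tag_lt (L : List (Slot k X))
    (hsort : L.Pairwise fun σ σ' => σ.tag ≤ σ'.tag) (m : ℕ) (hm : m < L.length)
    (σ' : Slot k X) (hσ' : σ' ∈ L) (htag : σ'.tag < L[m].tag) : σ' ∈ L.take m := by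
  obtain ⟨m', hm', rfl⟩ := List.getElem_of_mem hσ'
  rcases lt_or_ge m' m with h | h
  · have hm'' : m' < (L.take m).length := by rw [List.length_take]; omega
    have := List.getElem_mem hm''
    rwa [List.getElem_take] at this
  · rcases eq_or_lt_of_le h with rfl | h
    · omega
    · have := List.pairwise_iff_getElem.mp hsort m m' hm hm' h
      omega

theorem dnof_le_of_slots (hk : 0 < k) [Inhabited O] (F : (Fin k → X) → O)
    (L : List (Slot k X))
    (hlen : ∀ σ ∈ L, ∀ x, (σ.bits x).length = σ.len)
    (hsort : L.Pairwise fun σ σ' => σ.tag ≤ σ'.tag)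
    (hdet : ∀ σ ∈ L, ∀ x y, (∀ σ' ∈ L, σ'.tag < σ.tag → σ'.bits x = σ'.bits y) →
      NOFview σ.writer x = NOFview σ.writer y → σ.bits x = σ.bits y)
    (hout : ∀ (i : Fin k) x y, (∀ σ ∈ L, σ.bits x = σ.bits y) → NOFview i x = NOFview i y →
      F x = F y) :
    DNOF k X O F ≤ NL L := by
  classical
  set d : Fin k := ⟨0, hk⟩ with hd
  set wfun : ℕ → Fin k := fun p => (wlistL L).getD p d with hwfun
  have DET : ∀ p, p < NL L → ∀ x y, (tauL L x).take p = (tauL L y).take p →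
      NOFview (wfun p) x = NOFview (wfun p) y →
      (tauL L x).getD p false = (tauL L y).getD p false := by
    intro p hp x y htake hview
    have hp' : p < (L.map Slot.len).sum := hp
    obtain ⟨m, hm0, o, ho0, hpeq⟩ := exists_pos (L.map Slot.len) p hp'
    have hm : m < L.length := by simpa using hm0
    have ho : o < L[m].len := by
      have : (L.map Slot.len)[m] = L[m].len := by simp
      rwa [this] at ho0
    have hstart : ((L.map Slot.len).take m).sum = NL (L.take m) := by
      rw [← List.map_take]; rfl
    rw [hstart] at hpeq
    subst hpeq
    have hpre : ∀ σ' ∈ L.take m, σ'.bits x = σ'.bits y := by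
      have hmin : NL (L.take m) ⊓ (NL (L.take m) + o) = NL (L.take m) := by omega
      have h1 : (tauL L x).take (NL (L.take m)) = (tauL L y).take (NL (L.take m)) := by
        rw [← hmin, ← List.take_take, htake, List.take_take]
      rw [take_start L hlen m hm x, take_start L hlen m hm y] at h1
      exact eqslots (L.take m) (fun σ hσ z => hlen σ (List.mem_of_mem_take hσ) z) h1
    have hall : ∀ σ' ∈ L, σ'.tag < L[m].tag → σ'.bits x = σ'.bits y :=
      fun σ' h1 h2 => hpre σ' (mem_take_of_tag_lt L hsort m hm σ' h1 h2)
    have hw : wfun (NL (L.take m) + o) = L[m].writer := writer_at L m hm o ho d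
    rw [hw] at hview
    have hbits : L[m].bits x = L[m].bits y :=
      hdet L[m] (List.getElem_mem hm) x y hall hview
    rw [getD_at L hlen m hm o ho x, getD_at L hlen m hm o ho y, hbits]
  have main : ∀ P : NOFProtocol k X O, P.T = NL L →
      (∀ hist, P.speaker hist = wfun hist.length) →
      (∀ hist view, P.nextBit hist view =
        if h : ∃ z, (tauL L z).take hist.length = hist ∧ NOFview (wfun hist.length) z = view
        then (tauL L h.choose).getD hist.length false else false) →
      (∀ i hist view, P.out i hist view =
        if h : ∃ z, tauL L z = hist ∧ NOFview i z = view then F h.choose else default) →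
      NOFComputes P F := by
    intro P hT hspk hnext hodef
    have hrun : ∀ x p, p ≤ NL L → NOFrun P x p = (tauL L x).take p := by
      intro x p
      induction p with
      | zero => intro _; simp [NOFrun]
      | succ p ih =>
        intro h
        have hp : p < NL L := Nat.lt_of_succ_le h
        have hlx : (tauL L x).length = NL L := tauL_length L hlen x
        have hhl : ((tauL L x).take p).length = p := by rw [List.length_take]; omega
        rw [NOFrun, ih (Nat.le_of_lt hp)]
        rw [hspk, hhl]
        have hnb : P.nextBit ((tauL L x).take p) (NOFview (wfun p) x) = (tauL L x).getD p false := by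
          rw [hnext]
          have hex : ∃ z, (tauL L z).take ((tauL L x).take p).length = (tauL L x).take p ∧
              NOFview (wfun ((tauL L x).take p).length) z = NOFview (wfun p) x := by
            refine ⟨x, ?_, ?_⟩
            · rw [hhl]
            · rw [hhl]
          rw [dif_pos hex]
          set z := hex.choose with hz
          obtain ⟨h1, h2⟩ := hex.choose_spec
          rw [← hz] at h1 h2
          rw [hhl] at h1 h2
          rw [hhl]
          exact DET p hp z x h1 h2
        rw [hnb]
        have hget : (tauL L x).getD p false = (tauL L x)[p]'(by omega) :=
          List.getD_eq_getElem _ _ (by omega)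
        rw [hget, List.take_succ, List.getElem?_eq_getElem (by omega : p < (tauL L x).length)]
        rfl
    intro x i
    have hfin : NOFrun P x P.T = tauL L x := by
      rw [hT, hrun x (NL L) le_rfl, ← tauL_length L hlen x, List.take_length]
    rw [hfin, hodef]
    have hex : ∃ z, tauL L z = tauL L x ∧ NOFview i z = NOFview i x := ⟨x, rfl, rfl⟩
    rw [dif_pos hex]
    obtain ⟨h1, h2⟩ := hex.choose_spec
    exact hout i _ x (eqslots L hlen h1) h2
  refine Nat.sInf_le ?_
  exact ⟨⟨NL L, fun hist => wfun hist.length,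
    fun hist view =>
      if h : ∃ z, (tauL L z).take hist.length = hist ∧ NOFview (wfun hist.length) z = view
      then (tauL L h.choose).getD hist.length false else false,
    fun i hist view =>
      if h : ∃ z, tauL L z = hist ∧ NOFview i z = view then F h.choose else default⟩,
    rfl, main _ rfl (fun _ => rfl) (fun _ _ => rfl) (fun _ _ _ => rfl)⟩

end NOFSim


section MuxProof

open NOFSim

variable {k n ℓ : ℕ}
  (f : (Fin k → (Fin n → Bool)) → Bool)
  (E : Fin k → Fin k → Prop) [DecidableRel E]
  (πs : ℕ → Equiv.Perm (Fin k))
  (QQ : ℕ → GProtocol k (Fin n → Bool) Bool)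
  (S : Finset (Fin k × Fin k × Finset ℕ))
  (LEN : ℕ → Fin k → Fin k → ℕ) (T : ℕ)

/-- the instance-`r` input extracted from a direct-sum input -/
def instIn (hl : 0 < ℓ) (r : ℕ) (x : Fin k → Fin ℓ → Fin n → Bool) : Fin k → Fin n → Bool :=
  fun j => x j ⟨(r - 1) % ℓ, Nat.mod_lt _ hl⟩

/-- message bits of instance `r` -/
def msgBits (hl : 0 < ℓ) (r t : ℕ) (i j : Fin k) (x : Fin k → Fin ℓ → Fin n → Bool) :
    List Bool :=
  sentAt (permRel (πs r) E) (QQ r) (instIn hl r x) t i j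

/-- the extended index set `R ∪ {1}` -/
def Rp (s : Fin k × Fin k × Finset ℕ) : Finset ℕ := insert 1 s.2.2

/-- the message `(t,i,j)` of instance `r` is skipped -/
def skip (r : ℕ) (i j : Fin k) : Prop :=
  ∃ s ∈ S, i = s.1 ∧ r ∈ Rp s ∧ j = πs r s.2.1

instance skip.dec (r : ℕ) (i j : Fin k) : Decidable (skip πs S r i j) := by
  unfold skip; infer_instance

/-- the multiplexed (XOR) bits for triplet `s` at round `t` -/
def xorBits (hl : 0 < ℓ) (s : Fin k × Fin k × Finset ℕ) (t : ℕ)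
    (x : Fin k → Fin ℓ → Fin n → Bool) : List Bool :=
  (List.range (LEN t s.1 s.2.1)).map fun m0 =>
    (Rp s).fold xor false fun r => (msgBits E πs QQ hl r t s.1 (πs r s.2.1) x).getD m0 false

def msgSlotsR (hl : 0 < ℓ) (t r : ℕ) : List (Slot k (Fin ℓ → Fin n → Bool)) :=
  (List.finRange k).flatMap fun i => (List.finRange k).flatMap fun j =>
    if skip πs S r i j then []
    else [⟨i, t, LEN t ((πs r).symm i) ((πs r).symm j), msgBits E πs QQ hl r t i j⟩]

noncomputable def roundSlots (hl : 0 < ℓ) (t : ℕ) : List (Slot k (Fin ℓ → Fin n → Bool)) :=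
  ((List.range ℓ).flatMap fun u => msgSlotsR E πs QQ S LEN hl t (u+1)) ++
    (S.toList.map fun s => ⟨s.1, t, LEN t s.1 s.2.1, xorBits E πs QQ LEN hl s t⟩)

def outSlots (hl : 0 < ℓ) : List (Slot k (Fin ℓ → Fin n → Bool)) :=
  (List.range ℓ).map fun u => ⟨(QQ (u+1)).outParty, T, 1, fun x => [f (instIn hl (u+1) x)]⟩

noncomputable def LL (hl : 0 < ℓ) : List (Slot k (Fin ℓ → Fin n → Bool)) :=
  ((List.range T).flatMap fun t => roundSlots E πs QQ S LEN hl t) ++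
    outSlots f QQ T hl

end MuxProof


theorem ComputesG_congr {k : ℕ} {X O : Type} {E E' : Fin k → Fin k → Prop}
    (i1 : DecidableRel E) (i2 : DecidableRel E') (h : E = E')
    {P : GProtocol k X O} {F : (Fin k → X) → O}
    (hc : @ComputesG k X O E i1 P F) : @ComputesG k X O E' i2 P F := by
  subst h
  have h2 : i1 = i2 := by funext a b; exact Subsingleton.elim _ _
  subst h2; exact hc

theorem ObliviousG_congr {k : ℕ} {X O : Type} {E E' : Fin k → Fin k → Prop}
    (i1 : DecidableRel E) (i2 : DecidableRel E') (h : E = E')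
    {P : GProtocol k X O} {LEN : ℕ → Fin k → Fin k → ℕ}
    (hc : @ObliviousG k X O E i1 P LEN) : @ObliviousG k X O E' i2 P LEN := by
  subst h
  have h2 : i1 = i2 := by funext a b; exact Subsingleton.elim _ _
  subst h2; exact hc

lemma recvHist_eq_sentAt {k : ℕ} {X O : Type} (E : Fin k → Fin k → Prop) [DecidableRel E]
    (P : GProtocol k X O) (x : Fin k → X) :
    ∀ (t : ℕ) (i : Fin k) (t' : ℕ) (j : Fin k),
      recvHist E P x t i t' j = if t' < t then sentAt E P x t' j i else [] := by
  intro t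
  induction t with
  | zero => intro i t' j; simp [recvHist]
  | succ t ih =>
      intro i t' j
      simp only [recvHist]
      by_cases h : t' = t
      · subst h; rw [if_pos rfl, if_pos (Nat.lt_succ_self _)]; rfl
      · rw [if_neg h, ih]
        by_cases h2 : t' < t
        · rw [if_pos h2, if_pos (by omega)]
        · rw [if_neg h2, if_neg (by omega)]


/-- **Theorem 1 of the paper.**  Let `Q` be an oblivious `NOF_G`
protocol computing `f`, let `Π = (π_1,…,π_ℓ)` be permutations of `[k]` with `π_1`
the identity, assume `Q` is `π_i`-pattern-robust for every `2 ≤ i ≤ ℓ`, and let `S`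
be a `(Π,G)`-multiplexing set.  Then
`D^NOF(f^ℓ) ≤ ℓ·D^{NOF_G}(Q) + ℓ − Σ_{(a,b,R)∈S} |R|·W_Q(a,b)`. -/
theorem dnof_directSum_le_of_multiplexingSet (k n ℓ : ℕ)
    (f : (Fin k → (Fin n → Bool)) → Bool)
    (E : Fin k → Fin k → Prop) [DecidableRel E] (hsimple : ∀ i : Fin k, ¬ E i i)
    (Q : GProtocol k (Fin n → Bool) Bool)
    (LEN : ℕ → Fin k → Fin k → ℕ)
    (hobl : ObliviousG E Q LEN)
    (hcomp : ComputesG E Q f)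
    (πs : ℕ → Equiv.Perm (Fin k)) (hπ1 : πs 1 = Equiv.refl (Fin k))
    (hrob : ∀ i, 2 ≤ i → i ≤ ℓ → PatternRobust k (Fin n → Bool) E Q.rounds LEN f (πs i))
    (S : Finset (Fin k × Fin k × Finset ℕ))
    (hS : IsMultiplexingSet k ℓ πs E S) :
    DNOF k (Fin ℓ → Fin n → Bool) (Fin ℓ → Bool) (directSum ℓ f) ≤
      ℓ * costOfLEN Q.rounds LEN + ℓ -
        ∑ s ∈ S, s.2.2.card * WofLEN Q.rounds LEN s.1 s.2.1 := by
  classical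
  rcases Nat.eq_zero_or_pos k with hk0 | hk
  · subst hk0
    have h0 : DNOF 0 (Fin ℓ → Fin n → Bool) (Fin ℓ → Bool) (directSum ℓ f) = 0 := by
      unfold DNOF
      convert Nat.sInf_empty
      rw [Set.eq_empty_iff_forall_notMem]
      rintro c ⟨P, -, -⟩
      exact (P.speaker []).elim0
    rw [h0]; exact Nat.zero_le _
  rcases Nat.eq_zero_or_pos ℓ with hl0 | hl
  · subst hl0
    have h0 : DNOF k (Fin 0 → Fin n → Bool) (Fin 0 → Bool) (directSum 0 f) ≤ 0 := by
      refine Nat.sInf_le ⟨⟨0, fun _ => ⟨0, hk⟩, fun _ _ => false,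
        fun _ _ _ => fun u => u.elim0⟩, rfl, ?_⟩
      intro x i
      funext u; exact u.elim0
    exact le_trans h0 (Nat.zero_le _)
  set T := Q.rounds with hTdef
  -- uniform pattern-robust protocols, including the identity instance
  have hrob' : ∀ r, 1 ≤ r → r ≤ ℓ → PatternRobust k (Fin n → Bool) E T LEN f (πs r) := by
    intro r h1 h2
    rcases eq_or_lt_of_le h1 with h1e | h1'
    · subst h1e
      have hE : permRel (πs 1) E = E := by rw [hπ1]; rfl
      refine ⟨Q, rfl, ComputesG_congr _ _ hE.symm hcomp, ?_⟩
      have hL : (fun t (i j : Fin k) => LEN t ((πs 1).symm i) ((πs 1).symm j)) = LEN := by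
        rw [hπ1]; rfl
      rw [hL]
      exact ObliviousG_congr _ _ hE.symm hobl
    · exact hrob r h1' h2
  have hex : ∀ r : ℕ, ∃ Q' : GProtocol k (Fin n → Bool) Bool,
      1 ≤ r → r ≤ ℓ → Q'.rounds = T ∧ ComputesG (permRel (πs r) E) Q' f ∧
        ObliviousG (permRel (πs r) E) Q'
          (fun t i j => LEN t ((πs r).symm i) ((πs r).symm j)) := by
    intro r
    by_cases h : 1 ≤ r ∧ r ≤ ℓ
    · obtain ⟨Q', h1, h2, h3⟩ := hrob' r h.1 h.2
      exact ⟨Q', fun _ _ => ⟨h1, h2, h3⟩⟩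
    · exact ⟨⟨0, fun _ _ _ _ _ => [], ⟨0, hk⟩, fun _ _ => false⟩,
        fun a b => absurd ⟨a, b⟩ h⟩
  choose QQ hQQ using hex
  have hQr : ∀ r, 1 ≤ r → r ≤ ℓ → (QQ r).rounds = T := fun r h1 h2 => (hQQ r h1 h2).1
  have hQc : ∀ r, 1 ≤ r → r ≤ ℓ → ComputesG (permRel (πs r) E) (QQ r) f :=
    fun r h1 h2 => (hQQ r h1 h2).2.1
  have hQo : ∀ r, 1 ≤ r → r ≤ ℓ → ObliviousG (permRel (πs r) E) (QQ r)
      (fun t i j => LEN t ((πs r).symm i) ((πs r).symm j)) :=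
    fun r h1 h2 => (hQQ r h1 h2).2.2
  -- basic structural facts
  have hnself : ∀ r (i : Fin k), ¬ permRel (πs r) E i i := fun r i h => hsimple _ h
  have hgood : ∀ s ∈ S, IsGood k ℓ πs E s.1 s.2.1 s.2.2 := hS.1
  have hRpIcc : ∀ s ∈ S, ∀ r ∈ Rp s, 1 ≤ r ∧ r ≤ ℓ := by
    intro s hs r hr
    rcases Finset.mem_insert.mp hr with rfl | hrR
    · exact ⟨le_rfl, hl⟩
    · exact Finset.mem_Icc.mp ((hgood s hs).2.1 hrR)
  have h1nR : ∀ s ∈ S, (1 : ℕ) ∉ s.2.2 := by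
    intro s hs h1
    have hbM := (hgood s hs).2.2.2.1.2.2.2
    have hmem : πs 1 s.2.1 ∈ MAPf πs s.2.1 s.2.2 := Finset.mem_image_of_mem _ h1
    rw [hπ1] at hmem
    exact hbM hmem
  have hfixa : ∀ s ∈ S, ∀ r ∈ Rp s, πs r s.1 = s.1 := by
    intro s hs r hr
    rcases Finset.mem_insert.mp hr with rfl | hrR
    · rw [hπ1]; rfl
    · have hmem : πs r s.1 ∈ MAPf πs s.1 s.2.2 := Finset.mem_image_of_mem _ hrR
      rw [(hgood s hs).2.2.1] at hmem
      exact Finset.mem_singleton.mp hmem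
  have hsymma : ∀ s ∈ S, ∀ r ∈ Rp s, (πs r).symm s.1 = s.1 := by
    intro s hs r hr
    exact (Equiv.symm_apply_eq _).mpr (hfixa s hs r hr).symm
  have htgtmem : ∀ s ∈ S, ∀ r ∈ Rp s, πs r s.2.1 ∈ insert s.2.1 (MAPf πs s.2.1 s.2.2) := by
    intro s hs r hr
    rcases Finset.mem_insert.mp hr with rfl | hrR
    · rw [hπ1]; simp
    · exact Finset.mem_insert_of_mem (Finset.mem_image_of_mem _ hrR)
  have htgtinj : ∀ s ∈ S, ∀ r ∈ Rp s, ∀ r' ∈ Rp s, πs r s.2.1 = πs r' s.2.1 → r = r' := by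
    intro s hs r hr r' hr' heq
    have hbM := (hgood s hs).2.2.2.1.2.2.2
    rcases Finset.mem_insert.mp hr with rfl | hrR
    · rcases Finset.mem_insert.mp hr' with rfl | hr'R
      · rfl
      · have hmem : πs r' s.2.1 ∈ MAPf πs s.2.1 s.2.2 := Finset.mem_image_of_mem _ hr'R
        rw [hπ1] at heq
        simp only [Equiv.refl_apply] at heq
        rw [← heq] at hmem
        exact absurd hmem hbM
    · rcases Finset.mem_insert.mp hr' with rfl | hr'R
      · have hmem : πs r s.2.1 ∈ MAPf πs s.2.1 s.2.2 := Finset.mem_image_of_mem _ hrR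
        rw [hπ1] at heq
        simp only [Equiv.refl_apply] at heq
        rw [heq] at hmem
        exact absurd hmem hbM
      · have hinj := Finset.card_image_iff.mp (hgood s hs).2.2.2.1.1
        exact hinj (Finset.mem_coe.mpr hrR) (Finset.mem_coe.mpr hr'R) heq
  have hclaimA : ∀ s ∈ S, ∀ r ∈ Rp s, ∀ r' ∈ Rp s, r ≠ r' →
      ¬ permRel (πs r') E s.1 (πs r s.2.1) := by
    intro s hs r hr r' hr' hne
    obtain ⟨hab, hsub, hfix, ⟨hcard, hnonN, haM, hbM⟩, h3⟩ := hgood s hs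
    rcases Finset.mem_insert.mp hr' with h1e | hr'R
    · subst h1e
      intro h
      rw [hπ1] at h
      have h' : E s.1 (πs r s.2.1) := h
      rcases Finset.mem_insert.mp hr with rfl | hrR
      · exact hne rfl
      · exact hnonN _ (Finset.mem_image_of_mem _ hrR) h'
    · intro h
      refine h3 r' hr'R (πs r s.2.1) ?_ h
      refine Finset.mem_sdiff.mpr ⟨?_, ?_⟩
      · rcases Finset.mem_insert.mp hr with rfl | hrR
        · rw [hπ1]; simp
        · exact Finset.mem_union_left _ (Finset.mem_image_of_mem _ hrR)
      · simp only [Finset.mem_singleton]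
        intro heq
        exact hne (htgtinj s hs r hr r' hr' heq)
  have hclaimB : ∀ s' ∈ S, ∀ (r : ℕ) (j : Fin k), ¬ skip πs S r j s'.1 := by
    intro s' hs' r j hskip
    obtain ⟨s, hs, hjs, hrRp, heq⟩ := hskip
    by_cases hss : s = s'
    · subst hss
      obtain ⟨hab, hsub, hfix, ⟨hcard, hnonN, haM, hbM⟩, h3⟩ := hgood s hs
      rcases Finset.mem_insert.mp hrRp with rfl | hrR
      · rw [hπ1] at heq
        exact hab heq
      · have hmem : πs r s.2.1 ∈ MAPf πs s.2.1 s.2.2 := Finset.mem_image_of_mem _ hrR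
        rw [← heq] at hmem
        exact haM hmem
    · have hnot := (hS.2 s' hs' s hs (fun hh => hss hh.symm)).1
      exact hnot (by rw [heq]; exact htgtmem s hs r hrRp)
  have huniqS : ∀ s ∈ S, ∀ s' ∈ S, ∀ r, r ∈ Rp s → r ∈ Rp s' →
      πs r s.2.1 = πs r s'.2.1 → s = s' := by
    intro s hs s' hs' r hr hr' heq
    by_contra hss
    have hdisj := (hS.2 s hs s' hs' hss).2
    have h1 : πs r s.2.1 ∈ insert s.2.1 (MAPf πs s.2.1 s.2.2) := htgtmem s hs r hr
    have h2 : πs r s'.2.1 ∈ insert s'.2.1 (MAPf πs s'.2.1 s'.2.2) := htgtmem s' hs' r hr'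
    rw [← heq] at h2
    have hmem : πs r s.2.1 ∈ insert s.2.1 (MAPf πs s.2.1 s.2.2) ∩
        insert s'.2.1 (MAPf πs s'.2.1 s'.2.2) := Finset.mem_inter.mpr ⟨h1, h2⟩
    rw [hdisj] at hmem
    exact absurd hmem (Finset.notMem_empty _)
  -- message length facts
  have hlenmsg : ∀ r, 1 ≤ r → r ≤ ℓ → ∀ t, t < T → ∀ (i j : Fin k) x,
      (msgBits E πs QQ hl r t i j x).length = LEN t ((πs r).symm i) ((πs r).symm j) := by
    intro r h1 h2 t ht i j x
    exact hQo r h1 h2 (instIn hl r x) t i j (by rw [hQr r h1 h2]; exact ht)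
  -- views
  have hview_pt : ∀ (w : Fin k) (x y : Fin k → Fin ℓ → Fin n → Bool),
      NOFview w x = NOFview w y → ∀ c, c ≠ w → x c = y c := by
    intro w x y h c hc
    have h2 := congrFun h c
    simp only [NOFview, if_neg hc] at h2
    exact Option.some_injective _ h2
  have hviewG_eq : ∀ (r : ℕ) (i : Fin k) (x y : Fin k → Fin ℓ → Fin n → Bool),
      (∀ c, permRel (πs r) E i c → x c = y c) →
      viewG (permRel (πs r) E) i (instIn hl r x) = viewG (permRel (πs r) E) i (instIn hl r y) := by
    intro r i x y h
    funext c
    unfold viewG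
    split_ifs with hEc
    · unfold instIn
      rw [h c hEc]
    · rfl
  have hrecv_eq_of : ∀ (r : ℕ) (w : Fin k) x y (t : ℕ),
      (∀ t', t' < t → ∀ j, msgBits E πs QQ hl r t' j w x = msgBits E πs QQ hl r t' j w y) →
      recvHist (permRel (πs r) E) (QQ r) (instIn hl r x) t w =
        recvHist (permRel (πs r) E) (QQ r) (instIn hl r y) t w := by
    intro r w x y t h
    funext t' j
    rw [recvHist_eq_sentAt, recvHist_eq_sentAt]
    by_cases h2 : t' < t
    · rw [if_pos h2, if_pos h2]
      exact h t' h2 j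
    · rw [if_neg h2, if_neg h2]
  -- sender lemma: all incoming messages public
  have hsent_a : ∀ x y (t : ℕ),
      (∀ t', t' < t → ∀ r', 1 ≤ r' → r' ≤ ℓ → ∀ (i j : Fin k), ¬ skip πs S r' i j →
        msgBits E πs QQ hl r' t' i j x = msgBits E πs QQ hl r' t' i j y) →
      ∀ s ∈ S, ∀ r', 1 ≤ r' → r' ≤ ℓ →
      (∀ c, permRel (πs r') E s.1 c → x c = y c) →
      ∀ (j : Fin k), msgBits E πs QQ hl r' t s.1 j x = msgBits E πs QQ hl r' t s.1 j y := by
    intro x y t hpub s hs r' h1 h2 hv j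
    unfold msgBits sentAt
    rw [hviewG_eq r' s.1 x y hv]
    congr 1
    apply hrecv_eq_of
    intro t' ht' j'
    exact hpub t' ht' r' h1 h2 j' s.1 (hclaimB s hs r' j')
  -- recovery of skipped messages via XOR bits
  have hsent_skip : ∀ x y (t : ℕ), t < T →
      (∀ t', t' < t → ∀ r', 1 ≤ r' → r' ≤ ℓ → ∀ (i j : Fin k), ¬ skip πs S r' i j →
        msgBits E πs QQ hl r' t' i j x = msgBits E πs QQ hl r' t' i j y) →
      ∀ s ∈ S, xorBits E πs QQ LEN hl s t x = xorBits E πs QQ LEN hl s t y →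
      ∀ r ∈ Rp s, NOFview (πs r s.2.1) x = NOFview (πs r s.2.1) y →
      msgBits E πs QQ hl r t s.1 (πs r s.2.1) x =
        msgBits E πs QQ hl r t s.1 (πs r s.2.1) y := by
    intro x y t htT hpub s hs hxeq r hr hview
    obtain ⟨hr1, hr2⟩ := hRpIcc s hs r hr
    have hlx : (msgBits E πs QQ hl r t s.1 (πs r s.2.1) x).length = LEN t s.1 s.2.1 := by
      rw [hlenmsg r hr1 hr2 t htT, hsymma s hs r hr, Equiv.symm_apply_apply]
    have hly : (msgBits E πs QQ hl r t s.1 (πs r s.2.1) y).length = LEN t s.1 s.2.1 := by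
      rw [hlenmsg r hr1 hr2 t htT, hsymma s hs r hr, Equiv.symm_apply_apply]
    apply List.ext_getElem (by rw [hlx, hly])
    intro m0 hm0x hm0y
    have hm0 : m0 < LEN t s.1 s.2.1 := by rw [← hlx]; exact hm0x
    have hgx : ∀ z : Fin k → Fin ℓ → Fin n → Bool,
        (xorBits E πs QQ LEN hl s t z).getD m0 false =
        (Rp s).fold xor false
          (fun r' => (msgBits E πs QQ hl r' t s.1 (πs r' s.2.1) z).getD m0 false) := by
      intro z
      unfold xorBits
      rw [List.getD_eq_getElem _ _ (by simpa using hm0)]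
      rw [List.getElem_map, List.getElem_range]
    have hfold : (Rp s).fold xor false
          (fun r' => (msgBits E πs QQ hl r' t s.1 (πs r' s.2.1) x).getD m0 false) =
        (Rp s).fold xor false
          (fun r' => (msgBits E πs QQ hl r' t s.1 (πs r' s.2.1) y).getD m0 false) := by
      rw [← hgx x, ← hgx y, hxeq]
    have hothers : ∀ r' ∈ (Rp s).erase r,
        (msgBits E πs QQ hl r' t s.1 (πs r' s.2.1) x).getD m0 false =
        (msgBits E πs QQ hl r' t s.1 (πs r' s.2.1) y).getD m0 false := by
      intro r' hr'e
      obtain ⟨hne, hr'⟩ := Finset.mem_erase.mp hr'e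
      obtain ⟨h1', h2'⟩ := hRpIcc s hs r' hr'
      have hmsg : msgBits E πs QQ hl r' t s.1 (πs r' s.2.1) x =
          msgBits E πs QQ hl r' t s.1 (πs r' s.2.1) y := by
        apply hsent_a x y t hpub s hs r' h1' h2'
        intro c hc
        apply hview_pt _ x y hview c
        intro hcw
        exact hclaimA s hs r hr r' hr' (fun h => hne h.symm) (hcw ▸ hc)
      rw [hmsg]
    have hsplit : ∀ (g : ℕ → Bool), (Rp s).fold xor false g =
        xor (g r) (((Rp s).erase r).fold xor false g) := by
      intro g
      conv_lhs => rw [← Finset.insert_erase hr]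
      rw [Finset.fold_insert (Finset.notMem_erase _ _)]
    rw [hsplit, hsplit, Finset.fold_congr hothers] at hfold
    have hcancel : ∀ p q c : Bool, xor p c = xor q c → p = q := by decide
    have hbit := hcancel _ _ _ hfold
    rw [List.getD_eq_getElem _ _ hm0x, List.getD_eq_getElem _ _ hm0y] at hbit
    exact hbit
  -- the full received-history lemma
  have hrecv_full : ∀ x y (t : ℕ), t ≤ T →
      (∀ t', t' < t → ∀ r', 1 ≤ r' → r' ≤ ℓ → ∀ (i j : Fin k), ¬ skip πs S r' i j →
        msgBits E πs QQ hl r' t' i j x = msgBits E πs QQ hl r' t' i j y) →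
      (∀ t', t' < t → ∀ s ∈ S, xorBits E πs QQ LEN hl s t' x = xorBits E πs QQ LEN hl s t' y) →
      ∀ r, 1 ≤ r → r ≤ ℓ → ∀ (w : Fin k), NOFview w x = NOFview w y →
      recvHist (permRel (πs r) E) (QQ r) (instIn hl r x) t w =
        recvHist (permRel (πs r) E) (QQ r) (instIn hl r y) t w := by
    intro x y t htT hpub hxor r h1 h2 w hview
    apply hrecv_eq_of
    intro t' ht' j
    by_cases hsk : skip πs S r j w
    · obtain ⟨s, hs, hjeq, hrRp, hweq⟩ := hsk
      subst hjeq
      subst hweq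
      exact hsent_skip x y t' (lt_of_lt_of_le ht' htT)
        (fun t'' ht'' => hpub t'' (ht''.trans ht')) s hs (hxor t' ht' s hs) r hrRp hview
    · exact hpub t' ht' r h1 h2 j w hsk
  -- slot membership
  have hmemMSG : ∀ t, t < T → ∀ r, 1 ≤ r → r ≤ ℓ → ∀ (i j : Fin k), ¬ skip πs S r i j →
      (⟨i, t, LEN t ((πs r).symm i) ((πs r).symm j), msgBits E πs QQ hl r t i j⟩ :
        NOFSim.Slot k (Fin ℓ → Fin n → Bool)) ∈ LL f E πs QQ S LEN T hl := by
    intro t ht r h1 h2 i j hns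
    unfold LL
    apply List.mem_append_left
    apply List.mem_flatMap.mpr
    refine ⟨t, List.mem_range.mpr ht, ?_⟩
    unfold roundSlots
    apply List.mem_append_left
    apply List.mem_flatMap.mpr
    refine ⟨r - 1, List.mem_range.mpr (by omega), ?_⟩
    have hru : r - 1 + 1 = r := by omega
    rw [hru]
    unfold msgSlotsR
    apply List.mem_flatMap.mpr
    refine ⟨i, List.mem_finRange i, ?_⟩
    apply List.mem_flatMap.mpr
    refine ⟨j, List.mem_finRange j, ?_⟩
    rw [if_neg hns]
    exact List.mem_singleton.mpr rfl
  have hmemXOR : ∀ t, t < T → ∀ s ∈ S,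
      (⟨s.1, t, LEN t s.1 s.2.1, xorBits E πs QQ LEN hl s t⟩ :
        NOFSim.Slot k (Fin ℓ → Fin n → Bool)) ∈ LL f E πs QQ S LEN T hl := by
    intro t ht s hs
    unfold LL
    apply List.mem_append_left
    apply List.mem_flatMap.mpr
    refine ⟨t, List.mem_range.mpr ht, ?_⟩
    unfold roundSlots
    apply List.mem_append_right
    exact List.mem_map.mpr ⟨s, Finset.mem_toList.mpr hs, rfl⟩
  have hmemOUT : ∀ r, 1 ≤ r → r ≤ ℓ →
      (⟨(QQ r).outParty, T, 1, fun x => [f (instIn hl r x)]⟩ :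
        NOFSim.Slot k (Fin ℓ → Fin n → Bool)) ∈ LL f E πs QQ S LEN T hl := by
    intro r h1 h2
    unfold LL
    apply List.mem_append_right
    unfold outSlots
    apply List.mem_map.mpr
    refine ⟨r - 1, List.mem_range.mpr (by omega), ?_⟩
    have hru : r - 1 + 1 = r := by omega
    rw [hru]
  have hmemLL : ∀ σ, σ ∈ LL f E πs QQ S LEN T hl →
      (∃ t, t < T ∧ ∃ r, 1 ≤ r ∧ r ≤ ℓ ∧ ∃ i j, ¬ skip πs S r i j ∧
        σ = ⟨i, t, LEN t ((πs r).symm i) ((πs r).symm j), msgBits E πs QQ hl r t i j⟩) ∨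
      (∃ t, t < T ∧ ∃ s ∈ S, σ = ⟨s.1, t, LEN t s.1 s.2.1, xorBits E πs QQ LEN hl s t⟩) ∨
      (∃ r, 1 ≤ r ∧ r ≤ ℓ ∧ σ = ⟨(QQ r).outParty, T, 1, fun x => [f (instIn hl r x)]⟩) := by
    intro σ hσ
    unfold LL at hσ
    rcases List.mem_append.mp hσ with hσ | hσ
    · obtain ⟨t, htm, hσ⟩ := List.mem_flatMap.mp hσ
      have ht : t < T := List.mem_range.mp htm
      unfold roundSlots at hσ
      rcases List.mem_append.mp hσ with hσ | hσ
      · obtain ⟨u, hum, hσ⟩ := List.mem_flatMap.mp hσ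
        have hu : u < ℓ := List.mem_range.mp hum
        unfold msgSlotsR at hσ
        obtain ⟨i, -, hσ⟩ := List.mem_flatMap.mp hσ
        obtain ⟨j, -, hσ⟩ := List.mem_flatMap.mp hσ
        by_cases hsk : skip πs S (u+1) i j
        · rw [if_pos hsk] at hσ; simp at hσ
        · rw [if_neg hsk] at hσ
          left
          exact ⟨t, ht, u+1, by omega, by omega, i, j, hsk, (List.mem_singleton.mp hσ)⟩
      · obtain ⟨s, hsm, hσ⟩ := List.mem_map.mp hσ
        right; left
        exact ⟨t, ht, s, Finset.mem_toList.mp hsm, hσ.symm⟩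
    · unfold outSlots at hσ
      obtain ⟨u, hum, hσ⟩ := List.mem_map.mp hσ
      have hu : u < ℓ := List.mem_range.mp hum
      right; right
      exact ⟨u+1, by omega, by omega, hσ.symm⟩
  -- hypotheses of the slot simulation lemma
  have hlenLL : ∀ σ ∈ LL f E πs QQ S LEN T hl, ∀ x, (σ.bits x).length = σ.len := by
    intro σ hσ x
    rcases hmemLL σ hσ with ⟨t, ht, r, h1, h2, i, j, -, rfl⟩ | ⟨t, ht, s, hs, rfl⟩ |
      ⟨r, h1, h2, rfl⟩
    · exact hlenmsg r h1 h2 t ht i j x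
    · simp [xorBits]
    · rfl
  have htagRS : ∀ t σ, σ ∈ roundSlots E πs QQ S LEN hl t → σ.tag = t := by
    intro t σ hσ
    unfold roundSlots at hσ
    rcases List.mem_append.mp hσ with hσ | hσ
    · obtain ⟨u, -, hσ⟩ := List.mem_flatMap.mp hσ
      unfold msgSlotsR at hσ
      obtain ⟨i, -, hσ⟩ := List.mem_flatMap.mp hσ
      obtain ⟨j, -, hσ⟩ := List.mem_flatMap.mp hσ
      by_cases hsk : skip πs S (u+1) i j
      · rw [if_pos hsk] at hσ; simp at hσ
      · rw [if_neg hsk] at hσ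
        rw [List.mem_singleton.mp hσ]
    · obtain ⟨s, -, hσ⟩ := List.mem_map.mp hσ
      rw [← hσ]
  have hsortLL : (LL f E πs QQ S LEN T hl).Pairwise fun σ σ' => σ.tag ≤ σ'.tag := by
    have aux : ∀ TT : ℕ,
        (((List.range TT).flatMap fun t => roundSlots E πs QQ S LEN hl t).Pairwise
          fun σ σ' => σ.tag ≤ σ'.tag) ∧
        (∀ σ ∈ (List.range TT).flatMap fun t => roundSlots E πs QQ S LEN hl t, σ.tag < TT) := by
      intro TT
      induction TT with
      | zero => simp
      | succ TT ih =>
          rw [List.range_succ, List.flatMap_append, List.flatMap_cons, List.flatMap_nil,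
            List.append_nil]
          constructor
          · rw [List.pairwise_append]
            refine ⟨ih.1, ?_, ?_⟩
            · apply List.pairwise_iff_getElem.mpr
              intro a b ha hb hab
              rw [htagRS TT _ (List.getElem_mem ha), htagRS TT _ (List.getElem_mem hb)]
            · intro σ hσ σ' hσ'
              rw [htagRS TT _ hσ']
              exact le_of_lt (ih.2 σ hσ)
          · intro σ hσ
            rcases List.mem_append.mp hσ with hσ | hσ
            · exact lt_trans (ih.2 σ hσ) (Nat.lt_succ_self _)
            · rw [htagRS TT _ hσ]
              exact Nat.lt_succ_self _
    unfold LL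
    rw [List.pairwise_append]
    refine ⟨(aux T).1, ?_, ?_⟩
    · apply List.pairwise_iff_getElem.mpr
      intro a b ha hb hab
      have h1 : ∀ σ, σ ∈ outSlots f QQ T hl → σ.tag = T := by
        intro σ hσ
        unfold outSlots at hσ
        obtain ⟨u, -, hσ⟩ := List.mem_map.mp hσ
        rw [← hσ]
      rw [h1 _ (List.getElem_mem ha), h1 _ (List.getElem_mem hb)]
    · intro σ hσ σ' hσ'
      have h1 : σ'.tag = T := by
        unfold outSlots at hσ'
        obtain ⟨u, -, hσ'⟩ := List.mem_map.mp hσ'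
        rw [← hσ']
      rw [h1]
      exact le_of_lt ((aux T).2 σ hσ)
  have hdetLL : ∀ σ ∈ LL f E πs QQ S LEN T hl, ∀ x y,
      (∀ σ' ∈ LL f E πs QQ S LEN T hl, σ'.tag < σ.tag → σ'.bits x = σ'.bits y) →
      NOFview σ.writer x = NOFview σ.writer y → σ.bits x = σ.bits y := by
    intro σ hσ x y hprev hview
    rcases hmemLL σ hσ with ⟨t, ht, r, h1, h2, i, j, hns, rfl⟩ | ⟨t, ht, s, hs, rfl⟩ |
      ⟨r, h1, h2, rfl⟩
    · have HP : ∀ t', t' < t → ∀ r', 1 ≤ r' → r' ≤ ℓ → ∀ (i' j' : Fin k),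
          ¬ skip πs S r' i' j' →
          msgBits E πs QQ hl r' t' i' j' x = msgBits E πs QQ hl r' t' i' j' y := by
        intro t' ht' r' h1' h2' i' j' hns'
        exact hprev _ (hmemMSG t' (ht'.trans ht) r' h1' h2' i' j' hns') ht'
      have HX : ∀ t', t' < t → ∀ s' ∈ S,
          xorBits E πs QQ LEN hl s' t' x = xorBits E πs QQ LEN hl s' t' y := by
        intro t' ht' s' hs'
        exact hprev _ (hmemXOR t' (ht'.trans ht) s' hs') ht'
      show msgBits E πs QQ hl r t i j x = msgBits E πs QQ hl r t i j y
      unfold msgBits sentAt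
      rw [hviewG_eq r i x y
        (fun c hc => hview_pt i x y hview c (fun hci => absurd (hci ▸ hc) (hnself r i)))]
      congr 1
      exact hrecv_full x y t (le_of_lt ht) HP HX r h1 h2 i hview
    · have HP : ∀ t', t' < t → ∀ r', 1 ≤ r' → r' ≤ ℓ → ∀ (i' j' : Fin k),
          ¬ skip πs S r' i' j' →
          msgBits E πs QQ hl r' t' i' j' x = msgBits E πs QQ hl r' t' i' j' y := by
        intro t' ht' r' h1' h2' i' j' hns'
        exact hprev _ (hmemMSG t' (ht'.trans ht) r' h1' h2' i' j' hns') ht'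
      show xorBits E πs QQ LEN hl s t x = xorBits E πs QQ LEN hl s t y
      unfold xorBits
      apply List.map_congr_left
      intro m0 hm0
      apply Finset.fold_congr
      intro r' hr'
      obtain ⟨h1', h2'⟩ := hRpIcc s hs r' hr'
      have hmsg := hsent_a x y t HP s hs r' h1' h2'
        (fun c hc => hview_pt s.1 x y hview c (fun hca => absurd (hca ▸ hc) (hnself r' s.1)))
        (πs r' s.2.1)
      rw [hmsg]
    · have HP : ∀ t', t' < T → ∀ r', 1 ≤ r' → r' ≤ ℓ → ∀ (i' j' : Fin k),
          ¬ skip πs S r' i' j' →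
          msgBits E πs QQ hl r' t' i' j' x = msgBits E πs QQ hl r' t' i' j' y := by
        intro t' ht' r' h1' h2' i' j' hns'
        exact hprev _ (hmemMSG t' ht' r' h1' h2' i' j' hns') ht'
      have HX : ∀ t', t' < T → ∀ s' ∈ S,
          xorBits E πs QQ LEN hl s' t' x = xorBits E πs QQ LEN hl s' t' y := by
        intro t' ht' s' hs'
        exact hprev _ (hmemXOR t' ht' s' hs') ht'
      show [f (instIn hl r x)] = [f (instIn hl r y)]
      have hc1 := hQc r h1 h2 (instIn hl r x)
      have hc2 := hQc r h1 h2 (instIn hl r y)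
      rw [← hc1, ← hc2]
      have hrec : recvHist (permRel (πs r) E) (QQ r) (instIn hl r x) (QQ r).rounds
            (QQ r).outParty =
          recvHist (permRel (πs r) E) (QQ r) (instIn hl r y) (QQ r).rounds (QQ r).outParty := by
        rw [hQr r h1 h2]
        exact hrecv_full x y T le_rfl HP HX r h1 h2 (QQ r).outParty hview
      rw [hrec, hviewG_eq r (QQ r).outParty x y
        (fun c hc => hview_pt _ x y hview c (fun hco => absurd (hco ▸ hc) (hnself r _)))]
  have houtLL : ∀ (i : Fin k) x y, (∀ σ ∈ LL f E πs QQ S LEN T hl, σ.bits x = σ.bits y) →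
      NOFview i x = NOFview i y → directSum ℓ f x = directSum ℓ f y := by
    intro i x y hall hv
    funext u
    show f (fun j => x j u) = f (fun j => y j u)
    have hmem := hmemOUT (u+1) (by omega) (by have := u.isLt; omega)
    have hbits := hall _ hmem
    have heq : f (instIn hl (u+1) x) = f (instIn hl (u+1) y) := by
      have := congrArg (fun l => l.headI) hbits
      simpa using this
    have hx : ∀ z : Fin k → Fin ℓ → Fin n → Bool, instIn hl (u+1) z = fun j => z j u := by
      intro z
      funext j
      unfold instIn
      have hidx : (⟨(↑u + 1 - 1) % ℓ, Nat.mod_lt _ hl⟩ : Fin ℓ) = u := by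
        apply Fin.ext
        have hu := u.isLt
        simp [Nat.mod_eq_of_lt hu]
      rw [hidx]
    rw [← hx x, ← hx y]
    exact heq
  refine le_trans (NOFSim.dnof_le_of_slots hk (directSum ℓ f) (LL f E πs QQ S LEN T hl)
    hlenLL hsortLL hdetLL houtLL) ?_
  -- counting
  have hcount : NOFSim.NL (LL f E πs QQ S LEN T hl) +
      ∑ s ∈ S, s.2.2.card * WofLEN T LEN s.1 s.2.1 = ℓ * costOfLEN T LEN + ℓ := by
    have hNLapp : ∀ (A B : List (NOFSim.Slot k (Fin ℓ → Fin n → Bool))),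
        NOFSim.NL (A ++ B) = NOFSim.NL A + NOFSim.NL B := by
      intro A B; unfold NOFSim.NL; rw [List.map_append, List.sum_append]
    have hNLflat : ∀ {α : Type} (l : List α)
        (g : α → List (NOFSim.Slot k (Fin ℓ → Fin n → Bool))),
        NOFSim.NL (l.flatMap g) = (l.map fun a => NOFSim.NL (g a)).sum := by
      intro α l g
      induction l with
      | nil => simp [NOFSim.NL]
      | cons a l ih => rw [List.flatMap_cons, hNLapp, List.map_cons, List.sum_cons, ih]
    have hlsum : ∀ (m : ℕ) (g : ℕ → ℕ),
        ((List.range m).map g).sum = ∑ t ∈ Finset.range m, g t := by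
      intro m g
      induction m with
      | zero => simp
      | succ m ih =>
          rw [List.range_succ, List.map_append, List.sum_append, Finset.sum_range_succ, ih]
          simp
    have hfinsum : ∀ g : Fin k → ℕ, ((List.finRange k).map g).sum = ∑ i : Fin k, g i :=
      fun g => (Fin.sum_univ_def g).symm
    have hSsum : ∀ g : Fin k × Fin k × Finset ℕ → ℕ,
        (S.toList.map g).sum = ∑ s ∈ S, g s := by
      intro g
      calc (S.toList.map g).sum = ((S.toList.map g : List ℕ) : Multiset ℕ).sum :=
            (Multiset.sum_coe _).symm
        _ = (Multiset.map g S.val).sum := by rw [← Multiset.map_coe, Finset.coe_toList]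
        _ = ∑ s ∈ S, g s := rfl
    have hNLmsg : ∀ t r, NOFSim.NL (msgSlotsR E πs QQ S LEN hl t r) =
        ∑ i : Fin k, ∑ j : Fin k,
          if skip πs S r i j then 0 else LEN t ((πs r).symm i) ((πs r).symm j) := by
      intro t r
      unfold msgSlotsR
      rw [hNLflat, hfinsum]
      apply Finset.sum_congr rfl
      intro i _
      rw [hNLflat, hfinsum]
      apply Finset.sum_congr rfl
      intro j _
      by_cases hsk : skip πs S r i j
      · rw [if_pos hsk, if_pos hsk]; simp [NOFSim.NL]
      · rw [if_neg hsk, if_neg hsk]; simp [NOFSim.NL]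
    have hNLxor : ∀ t, NOFSim.NL (S.toList.map fun s =>
          (⟨s.1, t, LEN t s.1 s.2.1, xorBits E πs QQ LEN hl s t⟩ :
            NOFSim.Slot k (Fin ℓ → Fin n → Bool))) =
        ∑ s ∈ S, LEN t s.1 s.2.1 := by
      intro t
      unfold NOFSim.NL
      rw [List.map_map]
      exact hSsum _
    have hNLround : ∀ t, NOFSim.NL (roundSlots E πs QQ S LEN hl t) =
        (∑ u ∈ Finset.range ℓ, ∑ i : Fin k, ∑ j : Fin k,
          if skip πs S (u+1) i j then 0
          else LEN t ((πs (u+1)).symm i) ((πs (u+1)).symm j)) +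
        ∑ s ∈ S, LEN t s.1 s.2.1 := by
      intro t
      unfold roundSlots
      rw [hNLapp, hNLflat, hlsum, hNLxor]
      congr 1
      apply Finset.sum_congr rfl
      intro u _
      exact hNLmsg t (u+1)
    have hNLout : NOFSim.NL (outSlots f QQ T hl) = ℓ := by
      unfold outSlots NOFSim.NL
      rw [List.map_map, hlsum]
      simp
    have hNLLL : NOFSim.NL (LL f E πs QQ S LEN T hl) =
        (∑ t ∈ Finset.range T, NOFSim.NL (roundSlots E πs QQ S LEN hl t)) + ℓ := by
      unfold LL
      rw [hNLapp, hNLflat, hlsum, hNLout]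
    have hskipsum : ∀ t r, 1 ≤ r → r ≤ ℓ →
        (∑ i : Fin k, ∑ j : Fin k,
          if skip πs S r i j then LEN t ((πs r).symm i) ((πs r).symm j) else 0) =
        ∑ s ∈ S.filter (fun s => r ∈ Rp s), LEN t s.1 s.2.1 := by
      intro t r h1 h2
      rw [← Finset.sum_product', Finset.univ_product_univ, ← Finset.sum_filter]
      have himg : (Finset.univ.filter fun p : Fin k × Fin k => skip πs S r p.1 p.2) =
          (S.filter fun s => r ∈ Rp s).image fun s => (s.1, πs r s.2.1) := by
        ext p
        simp only [Finset.mem_filter, Finset.mem_univ, true_and, Finset.mem_image]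
        constructor
        · rintro ⟨s, hs, h1p, hrs, h2p⟩
          refine ⟨s, ⟨hs, hrs⟩, ?_⟩
          rw [Prod.ext_iff]
          exact ⟨h1p.symm, h2p.symm⟩
        · rintro ⟨s, ⟨hs, hrs⟩, rfl⟩
          exact ⟨s, hs, rfl, hrs, rfl⟩
      rw [himg, Finset.sum_image (by
        intro s hsf s' hsf' heq
        obtain ⟨hs, hrs⟩ := Finset.mem_filter.mp hsf
        obtain ⟨hs', hrs'⟩ := Finset.mem_filter.mp hsf'
        exact huniqS s hs s' hs' r hrs hrs' (congrArg Prod.snd heq))]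
      apply Finset.sum_congr rfl
      intro s hsf
      obtain ⟨hs, hrs⟩ := Finset.mem_filter.mp hsf
      rw [hsymma s hs r hrs, Equiv.symm_apply_apply]
    have hsplitsum : ∀ t r, 1 ≤ r → r ≤ ℓ →
        (∑ i : Fin k, ∑ j : Fin k,
          if skip πs S r i j then 0 else LEN t ((πs r).symm i) ((πs r).symm j)) +
        (∑ s ∈ S.filter fun s => r ∈ Rp s, LEN t s.1 s.2.1) =
        ∑ i : Fin k, ∑ j : Fin k, LEN t i j := by
      intro t r h1 h2
      rw [← hskipsum t r h1 h2]
      have hmerge : (∑ i : Fin k, ∑ j : Fin k,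
            if skip πs S r i j then 0 else LEN t ((πs r).symm i) ((πs r).symm j)) +
          (∑ i : Fin k, ∑ j : Fin k,
            if skip πs S r i j then LEN t ((πs r).symm i) ((πs r).symm j) else 0) =
          ∑ i : Fin k, ∑ j : Fin k, LEN t ((πs r).symm i) ((πs r).symm j) := by
        rw [← Finset.sum_add_distrib]
        apply Finset.sum_congr rfl
        intro i _
        rw [← Finset.sum_add_distrib]
        apply Finset.sum_congr rfl
        intro j _
        split_ifs <;> omega
      rw [hmerge]
      refine Fintype.sum_equiv (πs r).symm _ _ ?_
      intro i
      exact Fintype.sum_equiv (πs r).symm _ _ (fun j => rfl)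
    have hstep2 : ∀ t, (∑ u ∈ Finset.range ℓ,
          ∑ s ∈ S.filter (fun s => (u+1) ∈ Rp s), LEN t s.1 s.2.1) =
        ∑ s ∈ S, (Rp s).card * LEN t s.1 s.2.1 := by
      intro t
      have h1 : ∀ u, (∑ s ∈ S.filter (fun s => (u+1) ∈ Rp s), LEN t s.1 s.2.1) =
          ∑ s ∈ S, if (u+1) ∈ Rp s then LEN t s.1 s.2.1 else 0 :=
        fun u => Finset.sum_filter _ _
      rw [Finset.sum_congr rfl (fun u _ => h1 u), Finset.sum_comm]
      apply Finset.sum_congr rfl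
      intro s hs
      rw [← Finset.sum_filter, Finset.sum_const, smul_eq_mul]
      congr 1
      have himg : (Finset.range ℓ).filter (fun u => u+1 ∈ Rp s) =
          (Rp s).image (fun r => r - 1) := by
        ext v
        simp only [Finset.mem_filter, Finset.mem_range, Finset.mem_image]
        constructor
        · rintro ⟨hv, hmem⟩
          exact ⟨v+1, hmem, by omega⟩
        · rintro ⟨r, hr, rfl⟩
          obtain ⟨hr1, hr2⟩ := hRpIcc s hs r hr
          refine ⟨by omega, ?_⟩
          have hre : r - 1 + 1 = r := by omega
          rw [hre]
          exact hr
      rw [himg, Finset.card_image_of_injOn]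
      intro r hr r' hr' heq
      have heq' : r - 1 = r' - 1 := heq
      have h1' := (hRpIcc s hs r (Finset.mem_coe.mp hr)).1
      have h2' := (hRpIcc s hs r' (Finset.mem_coe.mp hr')).1
      omega
    have hcardRp : ∀ s ∈ S, (Rp s).card = s.2.2.card + 1 := by
      intro s hs
      unfold Rp
      rw [Finset.card_insert_of_notMem (h1nR s hs)]
    rw [hNLLL]
    have hR1 : (∑ t ∈ Finset.range T, NOFSim.NL (roundSlots E πs QQ S LEN hl t)) =
        (∑ t ∈ Finset.range T, ∑ u ∈ Finset.range ℓ, ∑ i : Fin k, ∑ j : Fin k,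
          if skip πs S (u+1) i j then 0
          else LEN t ((πs (u+1)).symm i) ((πs (u+1)).symm j)) +
        ∑ t ∈ Finset.range T, ∑ s ∈ S, LEN t s.1 s.2.1 := by
      rw [← Finset.sum_add_distrib]
      exact Finset.sum_congr rfl (fun t _ => hNLround t)
    rw [hR1]
    have e1 : (∑ t ∈ Finset.range T, ∑ u ∈ Finset.range ℓ, ∑ i : Fin k, ∑ j : Fin k,
          if skip πs S (u+1) i j then 0
          else LEN t ((πs (u+1)).symm i) ((πs (u+1)).symm j)) +
        (∑ t ∈ Finset.range T, ∑ u ∈ Finset.range ℓ,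
          ∑ s ∈ S.filter (fun s => (u+1) ∈ Rp s), LEN t s.1 s.2.1) =
        ℓ * costOfLEN T LEN := by
      rw [← Finset.sum_add_distrib]
      have hper : ∀ t ∈ Finset.range T,
          ((∑ u ∈ Finset.range ℓ, ∑ i : Fin k, ∑ j : Fin k,
            if skip πs S (u+1) i j then 0
            else LEN t ((πs (u+1)).symm i) ((πs (u+1)).symm j)) +
          (∑ u ∈ Finset.range ℓ,
            ∑ s ∈ S.filter (fun s => (u+1) ∈ Rp s), LEN t s.1 s.2.1)) =
          ℓ * (∑ i : Fin k, ∑ j : Fin k, LEN t i j) := by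
        intro t _
        rw [← Finset.sum_add_distrib]
        have := fun (u : ℕ) (hu : u ∈ Finset.range ℓ) => hsplitsum t (u+1)
          (by omega) (by have := Finset.mem_range.mp hu; omega)
        rw [Finset.sum_congr rfl this, Finset.sum_const, Finset.card_range, smul_eq_mul]
      rw [Finset.sum_congr rfl hper, ← Finset.mul_sum]
      rfl
    have e2 : (∑ t ∈ Finset.range T, ∑ u ∈ Finset.range ℓ,
          ∑ s ∈ S.filter (fun s => (u+1) ∈ Rp s), LEN t s.1 s.2.1) =
        (∑ s ∈ S, s.2.2.card * WofLEN T LEN s.1 s.2.1) +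
        ∑ s ∈ S, WofLEN T LEN s.1 s.2.1 := by
      rw [Finset.sum_congr rfl (fun t _ => hstep2 t), Finset.sum_comm]
      rw [← Finset.sum_add_distrib]
      apply Finset.sum_congr rfl
      intro s hs
      rw [← Finset.mul_sum, hcardRp s hs]
      have : WofLEN T LEN s.1 s.2.1 = ∑ t ∈ Finset.range T, LEN t s.1 s.2.1 := rfl
      rw [this]
      ring
    have e3 : (∑ t ∈ Finset.range T, ∑ s ∈ S, LEN t s.1 s.2.1) =
        ∑ s ∈ S, WofLEN T LEN s.1 s.2.1 := by
      rw [Finset.sum_comm]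
      rfl
    rw [e3]
    omega
  omega
end

section
/- Let G = ([k],E) be a directed graph and let S = {(a_1,b_1,B_1),…,(a_m,b_m,B_m)} be an ℓ-filtering set for G, where each B_i is enumerated as (B_i)_1,…,(B_i)_{|B_i|}. For 1 ≤ i ≤ m and 1 ≤ j ≤ |B_i| define row(i,j) = 1 + j + Σ_{u < i, a_u = a_i} |B_u|. Then row(i,j) ≤ ℓ for all such (i,j), and there exist permutations π_1,…,π_ℓ of [k] with π_1 the identity such that for all 1 ≤ i ≤ m and 1 ≤ j ≤ |B_i|: π_{row(i,j)}(a_i) = a_i, π_{row(i,j)}(b_i) = (B_i)_j, and π_{row(i,j)}(B_i) = (B_i ∪ {b_i}) \ {(B_i)_j}. -/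
/-!
`π_r` is the product, over all triplets `(a_i, b_i, B_i)`, of the transposition
exchanging `b_i` with `(B_i)_j` where `row(i,j) = r` (or of the identity if there is no such
`j`). The sets `{b_i} ∪ B_i` are pairwise disjoint, so these transpositions commute and act
independently: on `{b_i} ∪ B_i` the product is the `i`-th transposition, and it fixes every `a_i`,
which lies in none of these sets. The rows used by a given vertex `a` are consecutive and number
`Σ_{a_u = a} |B_u| ≤ ℓ - 1`, starting at row `2`, hence `row(i,j) ≤ ℓ`, and row `1` is the
identity.
-/

/-- An enumerated `ℓ`-filtering set `S = {(a_1,b_1,B_1),…,(a_m,b_m,B_m)}` for the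
directed graph `G = ([k],E)`, where each `B_i` is enumerated (without repetitions)
by the list `L i`.  The conditions are those of a filtering set:  `a_i ≠ b_i`,
`B_i ⊆ N̄_G(a_i)`, `a_i ∉ B_i`, `b_i ∉ B_i`; for distinct indices `i ≠ i'`:
`a_i ∉ {b_{i'}} ∪ B_{i'}` and `({b_i} ∪ B_i) ∩ ({b_{i'}} ∪ B_{i'}) = ∅`; and
`R(S) = max_v Σ_{a_i = v} |B_i| ≤ ℓ - 1`. -/
def FamFilteringSet (k ℓ m : ℕ) (E : Fin k → Fin k → Prop)
    (a b : Fin m → Fin k) (L : Fin m → List (Fin k)) : Prop :=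
  (∀ i, (L i).Nodup) ∧
    (∀ i, a i ≠ b i ∧ (∀ c ∈ L i, ¬ E (a i) c) ∧ a i ∉ L i ∧ b i ∉ L i) ∧
    (∀ i i' : Fin m, i ≠ i' →
      a i ∉ insert (b i') (L i').toFinset ∧
        insert (b i) (L i).toFinset ∩ insert (b i') (L i').toFinset = ∅) ∧
    ∀ v : Fin k, ∑ i ∈ Finset.univ.filter (fun i => a i = v), (L i).length ≤ ℓ - 1

/-- `row(i,j)` from the proof of Theorem 2 of the paper, with the enumeration index
`j` of `B_i` taken 0-based (so `row(i,j) = 1 + (j+1) + Σ_{u < i, a_u = a_i} |B_u|`). -/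
def rowFn {k m : ℕ} (a : Fin m → Fin k) (L : Fin m → List (Fin k))
    (i : Fin m) (j : ℕ) : ℕ :=
  2 + j + ∑ u ∈ Finset.univ.filter (fun u => u < i ∧ a u = a i), (L u).length

open Equiv Finset Function

section DisjointProduct

variable {ι α : Type*} {s : Finset ι} {g : ι → Perm α}

theorem Finset.noncommProd_perm_apply_eq_self (comm : (s : Set ι).Pairwise (Commute on g))
    {x : α} (hx : ∀ i ∈ s, g i x = x) : s.noncommProd g comm x = x :=
  (MulAction.stabilizer (Perm α) x).noncommProd_mem comm hx

theorem Finset.noncommProd_perm_apply_of_forall_ne [DecidableEq ι]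
    (comm : (s : Set ι).Pairwise (Commute on g)) {i : ι} (hi : i ∈ s)
    {x : α} (hx : ∀ j ∈ s, j ≠ i → g j x = x) : s.noncommProd g comm x = g i x := by
  rw [← s.mul_noncommProd_erase hi g comm, Perm.mul_apply]
  exact congrArg (g i) <| noncommProd_perm_apply_eq_self _
    fun j hj => hx j (mem_of_mem_erase hj) (ne_of_mem_erase hj)

variable {T : ι → Set α}

theorem Set.PairwiseDisjoint.pairwise_commute_perm (hT : (s : Set ι).PairwiseDisjoint T)
    (hg : ∀ i ∈ s, ∀ x ∉ T i, g i x = x) : (s : Set ι).Pairwise (Commute on g) :=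
  fun i hi j hj hij => Perm.Disjoint.commute fun x => by
    by_cases hx : x ∈ T i
    · exact .inr (hg j hj x (Set.disjoint_left.1 (hT hi hj hij) hx))
    · exact .inl (hg i hi x hx)

theorem Set.PairwiseDisjoint.noncommProd_perm_apply_of_mem [DecidableEq ι]
    (hT : (s : Set ι).PairwiseDisjoint T) (hg : ∀ i ∈ s, ∀ x ∉ T i, g i x = x)
    (comm : (s : Set ι).Pairwise (Commute on g)) {i : ι} (hi : i ∈ s) {x : α}
    (hx : x ∈ T i) : s.noncommProd g comm x = g i x :=
  noncommProd_perm_apply_of_forall_ne comm hi fun j hj hji =>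
    hg j hj x (Set.disjoint_left.1 (hT hi hj hji.symm) hx)

end DisjointProduct

theorem Finset.image_swap_of_mem_of_notMem {α : Type*} [DecidableEq α] {s : Finset α} {i j : α}
    (hi : i ∈ s) (hj : j ∉ s) : s.image (swap i j) = insert j s \ {i} := by
  apply coe_injective
  push_cast
  exact Equiv.image_swap_of_mem_of_notMem hi hj

section FilteringSet

variable {k ℓ m : ℕ} {E : Fin k → Fin k → Prop} {a b : Fin m → Fin k}
  {L : Fin m → List (Fin k)}

theorem rowFn_sub_rowFn_zero (i : Fin m) (j : ℕ) : rowFn a L i j - rowFn a L i 0 = j := by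
  unfold rowFn
  omega

theorem FamFilteringSet.rowFn_le (hS : FamFilteringSet k ℓ m E a b L) {i : Fin m} {j : ℕ}
    (hj : j < (L i).length) : rowFn a L i j ≤ ℓ := by
  have hsub : univ.filter (fun u => u < i ∧ a u = a i) ⊆ (univ.filter (a · = a i)).erase i :=
    fun u hu => by
      simp only [mem_filter, mem_univ, true_and, mem_erase] at hu ⊢
      exact ⟨hu.1.ne, hu.2⟩
  have hsum : (L i).length + ∑ u ∈ univ.filter (fun u => u < i ∧ a u = a i), (L u).length
      ≤ ℓ - 1 :=
    calc _ ≤ (L i).length + ∑ u ∈ (univ.filter (a · = a i)).erase i, (L u).length := by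
          gcongr
      _ = ∑ u ∈ univ.filter (a · = a i), (L u).length :=
          add_sum_erase _ (fun u => (L u).length) (by simp)
      _ ≤ ℓ - 1 := hS.2.2.2 (a i)
  unfold rowFn
  omega

theorem FamFilteringSet.pairwiseDisjoint (hS : FamFilteringSet k ℓ m E a b L) :
    (Set.univ : Set (Fin m)).PairwiseDisjoint
      fun i => (↑(insert (b i) (L i).toFinset) : Set (Fin k)) :=
  fun i _ i' _ hne => disjoint_coe.2 (disjoint_iff_inter_eq_empty.2 (hS.2.2.1 i i' hne).2)

theorem FamFilteringSet.notMem_insert (hS : FamFilteringSet k ℓ m E a b L) (i i' : Fin m) :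
    a i ∉ insert (b i') (L i').toFinset := by
  obtain rfl | hne := eq_or_ne i i'
  · simpa [not_or] using ⟨(hS.2.1 i).1, (hS.2.1 i).2.2.1⟩
  · exact (hS.2.2.1 i i' hne).1

def rowSwap (a b : Fin m → Fin k) (L : Fin m → List (Fin k)) (r : ℕ) (i : Fin m) :
    Perm (Fin k) :=
  if h : rowFn a L i 0 ≤ r ∧ r - rowFn a L i 0 < (L i).length then
    swap (b i) (L i)[r - rowFn a L i 0]
  else 1

theorem rowSwap_rowFn (i : Fin m) (j : Fin (L i).length) :
    rowSwap a b L (rowFn a L i j) i = swap (b i) ((L i).get j) := by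
  have hj : rowFn a L i j - rowFn a L i 0 = j := rowFn_sub_rowFn_zero i j
  rw [rowSwap, dif_pos ⟨by unfold rowFn; omega, by rw [hj]; exact j.2⟩]
  simp only [hj, List.get_eq_getElem]

theorem rowSwap_one (i : Fin m) : rowSwap a b L 1 i = 1 :=
  dif_neg fun h => by unfold rowFn at h; omega

theorem rowSwap_apply_of_notMem (r : ℕ) (i : Fin m) {x : Fin k}
    (hx : x ∉ insert (b i) (L i).toFinset) : rowSwap a b L r i x = x := by
  simp only [mem_insert, List.mem_toFinset, not_or] at hx
  unfold rowSwap
  split_ifs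
  · exact swap_apply_of_ne_of_ne hx.1 fun h => hx.2 (h ▸ List.getElem_mem _)
  · rfl

end FilteringSet

/-- **matrix construction in the proof of Theorem 2.**
Given an `ℓ`-filtering set for `G`, we have `row(i,j) ≤ ℓ` for all `i` and all
positions `j` in the enumeration of `B_i`, and there exist permutations
`π_1,…,π_ℓ` of `[k]` with `π_1` the identity such that for all `i, j`:
`π_{row(i,j)}(a_i) = a_i`, `π_{row(i,j)}(b_i) = (B_i)_j`, and
`π_{row(i,j)}(B_i) = (B_i ∪ {b_i}) \ {(B_i)_j}`. -/
theorem exists_row_permutations (k ℓ m : ℕ) (E : Fin k → Fin k → Prop)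
    (a b : Fin m → Fin k) (L : Fin m → List (Fin k))
    (hS : FamFilteringSet k ℓ m E a b L) :
    (∀ (i : Fin m) (j : Fin (L i).length), rowFn a L i j ≤ ℓ) ∧
      ∃ πs : ℕ → Equiv.Perm (Fin k), πs 1 = Equiv.refl (Fin k) ∧
        ∀ (i : Fin m) (j : Fin (L i).length),
          πs (rowFn a L i j) (a i) = a i ∧
          πs (rowFn a L i j) (b i) = (L i).get j ∧
          (L i).toFinset.image (πs (rowFn a L i j)) =
            insert (b i) (L i).toFinset \ {(L i).get j} := by
  have hT := hS.pairwiseDisjoint.subset (Set.subset_univ (univ : Finset (Fin m)))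
  have hfix (r : ℕ) : ∀ i ∈ univ, ∀ x ∉ (↑(insert (b i) (L i).toFinset) : Set (Fin k)),
      rowSwap a b L r i x = x := fun i _ _ => rowSwap_apply_of_notMem r i
  refine ⟨fun i j => hS.rowFn_le j.2,
    fun r => univ.noncommProd (rowSwap a b L r) (hT.pairwise_commute_perm (hfix r)),
    Perm.ext fun x => noncommProd_perm_apply_eq_self _ fun i _ => by rw [rowSwap_one]; rfl,
    fun i j => ?_⟩
  have hπ : ∀ x ∈ insert (b i) (L i).toFinset, univ.noncommProd (rowSwap a b L (rowFn a L i j))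
      (hT.pairwise_commute_perm (hfix _)) x = swap (b i) ((L i).get j) x := fun x hx => by
    rw [hT.noncommProd_perm_apply_of_mem (hfix _) _ (mem_univ i) hx, rowSwap_rowFn]
  have hmem : (L i).get j ∈ (L i).toFinset := List.mem_toFinset.2 (List.get_mem _ _)
  have hb : b i ∉ (L i).toFinset := by simpa using (hS.2.1 i).2.2.2
  refine ⟨noncommProd_perm_apply_eq_self _ fun i' _ =>
      rowSwap_apply_of_notMem _ i' (hS.notMem_insert i i'), ?_, ?_⟩
  · rw [hπ _ (mem_insert_self _ _), swap_apply_left]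
  · rw [image_congr fun x hx => hπ x (mem_insert_of_mem hx), swap_comm,
      Finset.image_swap_of_mem_of_notMem hmem hb]
end

section
/- Let k ≥ 3 and let G = ([k], {(k,1)} ∪ {(1,i) : 2 ≤ i ≤ k}). For 1 ≤ r ≤ k−1, let π_r be the permutation of [k] that fixes k and maps each i ∈ [k−1] to ((i + r − 2) mod (k−1)) + 1 (so π_1 is the identity and π_r(1) = r). Then for Π = (π_1,…,π_{k−1}), the triplet (k, 1, {2,…,k−1}) is (Π,G)-good, and the singleton {(k, 1, {2,…,k−1})} is a (Π,G)-multiplexing set. -/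
/-- **Example 1 of the paper.**  Parties `1,…,k` are represented by
`Fin k` (party `p` is `⟨p-1⟩`).  Let `G` have exactly the edges `(k,1)` and `(1,i)`
for `2 ≤ i ≤ k`, and for `1 ≤ r ≤ k-1` let `π_r` be the permutation fixing `k` and
mapping each `i ∈ [k-1]` to `((i + r - 2) mod (k-1)) + 1` (0-based: an index
`i < k-1` is mapped to `(i + r - 1) mod (k-1)`); in particular `π_1` is the
identity and `π_r(1) = r`.  Then the triplet `(k, 1, {2,…,k-1})` is `(Π,G)`-good
and `{(k, 1, {2,…,k-1})}` is a `(Π,G)`-multiplexing set (with `ℓ = k-1`). -/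
theorem example_multiplexingSet (k : ℕ) (hk : 3 ≤ k)
    (πs : ℕ → Equiv.Perm (Fin k))
    (hπ : ∀ r, 1 ≤ r → r ≤ k - 1 → ∀ i : Fin k,
      ((i : ℕ) < k - 1 → ((πs r i : ℕ)) = ((i : ℕ) + r - 1) % (k - 1)) ∧
      ((i : ℕ) = k - 1 → πs r i = i))
    (E : Fin k → Fin k → Prop)
    (hE : ∀ i j : Fin k, E i j ↔
      ((i : ℕ) = k - 1 ∧ (j : ℕ) = 0) ∨ ((i : ℕ) = 0 ∧ 1 ≤ (j : ℕ))) :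
    IsGood k (k - 1) πs E ⟨k - 1, by omega⟩ ⟨0, by omega⟩ (Finset.Icc 2 (k - 1)) ∧
      IsMultiplexingSet k (k - 1) πs E
        {(⟨k - 1, by omega⟩, ⟨0, by omega⟩, Finset.Icc 2 (k - 1))} := by

  have hk1 : 0 < k - 1 := by omega
  set a : Fin k := ⟨k - 1, by omega⟩ with ha
  set b : Fin k := ⟨0, by omega⟩ with hb
  set R := Finset.Icc 2 (k - 1) with hR
  have hfix : ∀ r ∈ R, πs r a = a := by
    intro r hr
    rw [hR, Finset.mem_Icc] at hr
    exact (hπ r (by omega) hr.2 a).2 rfl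
  have hbval : ∀ r ∈ R, (πs r b : ℕ) = r - 1 := by
    intro r hr
    rw [hR, Finset.mem_Icc] at hr
    have h := (hπ r (by omega) hr.2 b).1 (by simp [hb]; omega)
    rw [h]
    simp only [hb]
    have : (0 + r - 1) = r - 1 := by omega
    rw [this, Nat.mod_eq_of_lt (by omega)]
  have hmem : ∀ c : Fin k, c ∈ MAPf πs b R ↔ 1 ≤ (c : ℕ) ∧ (c : ℕ) ≤ k - 2 := by
    intro c
    constructor
    · intro hc
      rw [MAPf, Finset.mem_image] at hc
      obtain ⟨r, hr, hrc⟩ := hc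
      have := hbval r hr
      rw [hR, Finset.mem_Icc] at hr
      rw [hrc] at this
      omega
    · intro ⟨h1, h2⟩
      rw [MAPf, Finset.mem_image]
      refine ⟨(c : ℕ) + 1, ?_, ?_⟩
      · rw [hR, Finset.mem_Icc]; omega
      · have hr : (c : ℕ) + 1 ∈ R := by rw [hR, Finset.mem_Icc]; omega
        have := hbval _ hr
        exact Fin.ext (by omega)
  have haval : (a : ℕ) = k - 1 := rfl
  have hbval0 : (b : ℕ) = 0 := rfl
  have hgood : IsGood k (k - 1) πs E a b R := by
    refine ⟨?_, ?_, ?_, ⟨?_, ?_, ?_, ?_⟩, ?_⟩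
    · intro h
      have := congrArg Fin.val h
      simp [ha, hb] at this
      omega
    · intro r hr
      rw [hR, Finset.mem_Icc] at hr
      rw [Finset.mem_Icc]
      omega
    · apply Finset.ext
      intro c
      rw [MAPf, Finset.mem_image, Finset.mem_singleton]
      constructor
      · rintro ⟨r, hr, hrc⟩
        rw [← hrc, hfix r hr]
      · intro hc
        refine ⟨2, ?_, ?_⟩
        · rw [hR, Finset.mem_Icc]; omega
        · rw [hfix 2 (by rw [hR, Finset.mem_Icc]; omega), hc]
    · rw [MAPf]
      apply Finset.card_image_of_injOn
      intro r hr r' hr' h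
      have h1 := hbval r (Finset.mem_coe.mp hr)
      have h2 := hbval r' (Finset.mem_coe.mp hr')
      have hv := congrArg Fin.val h
      simp only at hv
      rw [hv] at h1
      rw [Finset.mem_coe] at hr hr'
      rw [hR, Finset.mem_Icc] at hr hr'
      omega
    · intro c hc
      rw [hmem] at hc
      rw [hE]
      push_neg
      constructor
      · intro _; omega
      · intro h; omega
    · intro h
      rw [hmem] at h
      omega
    · intro h
      rw [hmem] at h
      omega
    · intro r hr c hc
      rw [Finset.mem_sdiff, Finset.mem_singleton] at hc
      obtain ⟨hc1, hc2⟩ := hc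
      have hfa : (πs r).symm a = a := by
        exact (Equiv.symm_apply_eq _).mpr (hfix r hr).symm
      rw [hfa, hE]
      push_neg
      constructor
      · intro _ h0
        have : (πs r).symm c = b := Fin.ext (by rw [hbval0]; exact h0)
        apply hc2
        rw [← this]
        simp
      · intro h; omega
  refine ⟨hgood, ?_, ?_⟩
  · intro s hs
    rw [Finset.mem_singleton] at hs
    subst hs
    exact hgood
  · intro s hs s' hs' hne
    rw [Finset.mem_singleton] at hs hs'
    exact absurd (hs.trans hs'.symm) hne
end
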